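/- arXiv:2011.09406 — 8 statements merged into one kernel-verified Lean document; each statement's English description precedes it below -/
import Mathlib

section
/- Let G = (V, E) be a finite graph with edge weights p : E → ℝ≥0 such that the average fractional degree is at most 1/2 on every vertex-induced subgraph (equivalently, every nonempty subset U of vertices contains a vertex whose fractional degree within U is at most 1/2). Then there exists an orientation of the edges of G such that for every vertex v, the total weight of edges oriented into v is at most 1/2. -/
/-!
Peel off a vertex `v` of fractional degree at most `1/2` in the current vertex set `U`, orient
every edge of `U` at `v` towards `v`, and recurse on `U \ {v}`. Each vertex receives exactly the
edges present when it is removed, so its in-degree is the degree it had at that moment.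
-/

namespace Finset

variable {V M : Type*} [Fintype V] [DecidableEq V]

def edgesWithin (E : Finset (Sym2 V)) (U : Finset V) : Finset (Sym2 V) :=
  E.filter (fun e => ∀ x ∈ e, x ∈ U)

theorem mem_edgesWithin {E : Finset (Sym2 V)} {U : Finset V} {e : Sym2 V} :
    e ∈ edgesWithin E U ↔ e ∈ E ∧ ∀ x ∈ e, x ∈ U := by
  simp [edgesWithin]

theorem edgesWithin_univ (E : Finset (Sym2 V)) : edgesWithin E univ = E := by
  ext e; simp [mem_edgesWithin]

theorem mem_edgesWithin_erase {E : Finset (Sym2 V)} {U : Finset V} {v : V} {e : Sym2 V} :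
    e ∈ edgesWithin E (U.erase v) ↔ e ∈ edgesWithin E U ∧ v ∉ e := by
  simp only [mem_edgesWithin, mem_erase]
  exact ⟨fun ⟨hE, hU⟩ => ⟨⟨hE, fun x hx => (hU x hx).2⟩, fun hv => (hU v hv).1 rfl⟩,
    fun ⟨⟨hE, hU⟩, hv⟩ => ⟨hE, fun x hx => ⟨fun hxv => hv (hxv ▸ hx), hU x hx⟩⟩⟩

theorem filter_ite_head_eq_self {E : Finset (Sym2 V)} {U : Finset V} {v : V}
    {head : Sym2 V → V} (hhead : ∀ e ∈ edgesWithin E (U.erase v), head e ∈ e) :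
    (edgesWithin E U).filter (fun e => (if v ∈ e then v else head e) = v) =
      (edgesWithin E U).filter (v ∈ ·) := by
  refine filter_congr fun e he => ?_
  by_cases hv : v ∈ e
  · simp [hv]
  · have := hhead e (mem_edgesWithin_erase.2 ⟨he, hv⟩)
    simp only [hv, if_false, iff_false]
    exact fun h => hv (h ▸ this)

theorem filter_ite_head_eq_of_ne {E : Finset (Sym2 V)} {U : Finset V} {u v : V}
    (head : Sym2 V → V) (huv : u ≠ v) :
    (edgesWithin E U).filter (fun e => (if v ∈ e then v else head e) = u) =
      (edgesWithin E (U.erase v)).filter (head · = u) := by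
  ext e
  by_cases hv : v ∈ e <;> simp [mem_edgesWithin_erase, hv, Ne.symm huv]

variable [AddCommMonoid M] [LE M] in
theorem exists_orientation_edgesWithin (E : Finset (Sym2 V)) (p : Sym2 V → M) (c : M)
    (h : ∀ U : Finset V, U.Nonempty →
      ∃ v ∈ U, ∑ e ∈ (edgesWithin E U).filter (v ∈ ·), p e ≤ c)
    (U : Finset V) :
    ∃ head : Sym2 V → V, (∀ e ∈ edgesWithin E U, head e ∈ e) ∧
      ∀ u ∈ U, ∑ e ∈ (edgesWithin E U).filter (head · = u), p e ≤ c := by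
  induction U using strongInduction with
  | _ U ih =>
    obtain rfl | hU := U.eq_empty_or_nonempty
    · refine ⟨fun e => e.out.1, fun e he => ?_, by simp⟩
      exact absurd ((mem_edgesWithin.1 he).2 _ e.out_fst_mem) (notMem_empty _)
    obtain ⟨v, hvU, hv⟩ := h U hU
    obtain ⟨head, hhead, hdeg⟩ := ih (U.erase v) (erase_ssubset hvU)
    refine ⟨fun e => if v ∈ e then v else head e, fun e he => ?_, fun u hu => ?_⟩
    · by_cases hve : v ∈ e
      · simp [hve]
      · simpa [hve] using hhead e (mem_edgesWithin_erase.2 ⟨he, hve⟩)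
    · obtain rfl | huv := eq_or_ne u v
      · rwa [filter_ite_head_eq_self hhead]
      · rw [filter_ite_head_eq_of_ne head huv]
        exact hdeg u (mem_erase.2 ⟨huv, hu⟩)

end Finset

open scoped Classical in
theorem stmt_2_general {V : Type*} [Fintype V] [DecidableEq V]
    (G : SimpleGraph V) [DecidableRel G.Adj]
    (p : Sym2 V → ℝ)
    (h : ∀ U : Finset V, U.Nonempty → ∃ v ∈ U,
      ∑ e ∈ (G.edgeFinset.filter (fun e => ∀ x ∈ e, x ∈ U)).filter (fun e => v ∈ e), p e
        ≤ 1 / 2) :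
    ∃ head : Sym2 V → V, (∀ e ∈ G.edgeFinset, head e ∈ e) ∧
      ∀ v : V, ∑ e ∈ G.edgeFinset.filter (fun e => head e = v), p e ≤ 1 / 2 := by
  obtain ⟨head, hhead, hdeg⟩ :=
    Finset.exists_orientation_edgesWithin G.edgeFinset p (1 / 2) h .univ
  rw [Finset.edgesWithin_univ] at hhead hdeg
  exact ⟨head, hhead, fun v => hdeg v (Finset.mem_univ v)⟩

open scoped Classical in
/-- If every nonempty vertex subset `U` contains a vertex whose fractional degree within `U`
is at most `1/2`, then there is an orientation of the edges of `G` (a choice `head e ∈ e` of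
head for each edge) such that the fractional in-degree of every vertex is at most `1/2`. -/
theorem stmt_2 {V : Type*} [Fintype V] [DecidableEq V]
    (G : SimpleGraph V) [DecidableRel G.Adj]
    (p : Sym2 V → ℝ) (hp0 : ∀ e, 0 ≤ p e)
    (h : ∀ U : Finset V, U.Nonempty → ∃ v ∈ U,
      ∑ e ∈ (G.edgeFinset.filter (fun e => ∀ x ∈ e, x ∈ U)).filter (fun e => v ∈ e), p e
        ≤ 1 / 2) :
    ∃ head : Sym2 V → V, (∀ e ∈ G.edgeFinset, head e ∈ e) ∧
      ∀ v : V, ∑ e ∈ G.edgeFinset.filter (fun e => head e = v), p e ≤ 1 / 2 :=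
  stmt_2_general G p h
end

section
/- Let G = (V, E) be a directed graph, p : E → ℝ≥0 with fractional in-degree at most 1/2 at every vertex, and t : E → ℝ≥0. Each edge is independently active with probability p_e. Choose A ⊆ V uniformly at random (each vertex independently, also independent of edge activations) and let Ŝ = {(u,v) : u ∈ A, v ∉ A}. For e = (u,v) ∈ Ŝ, let b_e(Ŝ) be the probability (over edge activations) that e is spanned by the active edges of Ŝ ∖ {e} in the graphic matroid. Then E_Ŝ[∑_{e ∈ Ŝ} p_e t_e (1 − b_e(Ŝ))] ≥ (1/8) ∑_{e ∈ E} p_e t_e. -/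
/-!
A uniformly random `A` puts a loopless edge `(u, v)` into the cut `Ŝ` with probability `1/4`.
Given `e = (u, v) ∈ Ŝ`, every edge of `Ŝ` leaves `A` while `v ∉ A`, so an active path of
`Ŝ ∖ {e}` joining `u` to `v` must use an edge of `Ŝ` entering `v`; by the union bound
`b_e(Ŝ) ≤ ∑_{f into v} p_f ≤ 1/2`. Hence the expectation is at least
`(1/4) · (1/2) · ∑_e p_e t_e`.
-/

open Finset

section ActiveSubsets

variable {α : Type*} [DecidableEq α]

/-- Probability that exactly the elements of `R` are active among those of `S`, each `f` being
active independently with probability `p f`. -/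
def activeWeight (S : Finset α) (p : α → ℝ) (R : Finset α) : ℝ :=
  (∏ f ∈ R, p f) * ∏ f ∈ S \ R, (1 - p f)

lemma activeWeight_nonneg {p : α → ℝ} (hp0 : ∀ e, 0 ≤ p e) (hp1 : ∀ e, p e ≤ 1)
    (S R : Finset α) : 0 ≤ activeWeight S p R :=
  mul_nonneg (prod_nonneg fun f _ => hp0 f) (prod_nonneg fun f _ => sub_nonneg.2 (hp1 f))

lemma sum_activeWeight (S : Finset α) (p : α → ℝ) :
    ∑ R ∈ S.powerset, activeWeight S p R = 1 := by
  simp [activeWeight, ← prod_add]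

lemma activeWeight_insert {S R : Finset α} {g : α} (hg : g ∉ S) (hgR : g ∉ R) (p : α → ℝ) :
    activeWeight (insert g S) p (insert g R) = p g * activeWeight S p R := by
  rw [activeWeight, activeWeight, insert_sdiff_insert, sdiff_insert_of_notMem hg,
    prod_insert hgR, mul_assoc]

lemma sum_activeWeight_of_mem (S : Finset α) (p : α → ℝ) {g : α} (hg : g ∈ S) :
    ∑ R ∈ S.powerset, (if g ∈ R then activeWeight S p R else 0) = p g := by
  have hg' := notMem_erase g S
  rw [← insert_erase hg, sum_powerset_insert hg']
  have hgR : ∀ R ∈ (S.erase g).powerset, g ∉ R :=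
    fun R hR => notMem_mono (mem_powerset.1 hR) hg'
  rw [sum_eq_zero fun R hR => if_neg (hgR R hR), zero_add,
    sum_congr rfl fun R hR => by
      rw [if_pos (mem_insert_self g R), activeWeight_insert hg' (hgR R hR)],
    ← mul_sum, sum_activeWeight, mul_one]

lemma sum_activeWeight_le_of_exists_mem {p : α → ℝ} (hp0 : ∀ e, 0 ≤ p e) (hp1 : ∀ e, p e ≤ 1)
    {S T : Finset α} (hTS : T ⊆ S) (P : Finset α → Prop) [DecidablePred P]
    (hP : ∀ R ⊆ S, P R → ∃ g ∈ T, g ∈ R) :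
    ∑ R ∈ S.powerset, (if P R then activeWeight S p R else 0) ≤ ∑ g ∈ T, p g := by
  have hw := activeWeight_nonneg hp0 hp1 S
  calc ∑ R ∈ S.powerset, (if P R then activeWeight S p R else 0)
      ≤ ∑ R ∈ S.powerset, ∑ g ∈ T, (if g ∈ R then activeWeight S p R else 0) := by
        refine sum_le_sum fun R hR => ?_
        split_ifs with hPR
        · obtain ⟨g, hgT, hgR⟩ := hP R (mem_powerset.1 hR) hPR
          calc activeWeight S p R = if g ∈ R then activeWeight S p R else 0 := (if_pos hgR).symm
            _ ≤ _ := single_le_sum (f := fun g => if g ∈ R then activeWeight S p R else 0)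
                (fun g _ => ite_nonneg (hw R) le_rfl) hgT
        · exact sum_nonneg fun g _ => ite_nonneg (hw R) le_rfl
    _ = ∑ g ∈ T, p g := by
        rw [sum_comm]
        exact sum_congr rfl fun g hg => sum_activeWeight_of_mem S p (hTS hg)

end ActiveSubsets

lemma card_filter_mem_notMem_powerset_univ {V : Type*} [Fintype V] [DecidableEq V] {u v : V}
    (huv : u ≠ v) :
    #(univ.powerset.filter fun A : Finset V => u ∈ A ∧ v ∉ A) * 4 = 2 ^ Fintype.card V := by
  set s := (univ.erase u).erase v
  have hv : v ∉ s := by simp [s]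
  have hu : u ∉ insert v s := by simp [s, huv]
  have hsub : ∀ A ∈ s.powerset, u ∉ A ∧ v ∉ A := fun A hA =>
    ⟨notMem_mono (mem_powerset.1 hA) (by simp [s]), notMem_mono (mem_powerset.1 hA) hv⟩
  have huniv : (univ : Finset V) = insert u (insert v s) := by
    rw [insert_erase (mem_erase.2 ⟨huv.symm, mem_univ v⟩), insert_erase (mem_univ u)]
  have hcard : Fintype.card V = #s + 2 := by
    rw [← card_univ, huniv, card_insert_of_notMem hu, card_insert_of_notMem hv]
  rw [card_filter, huniv, sum_powerset_insert hu, sum_powerset_insert hv, sum_powerset_insert hv,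
    hcard, pow_add, ← card_powerset, card_eq_sum_ones]
  simp +contextual [hsub, huv, huv.symm]

section DirectedCuts

variable {V : Type*}

open scoped Classical in
noncomputable def dirCut (E : Finset (V × V)) (A : Finset V) : Finset (V × V) :=
  E.filter fun e => e.1 ∈ A ∧ e.2 ∉ A

open scoped Classical in
lemma mem_dirCut {E : Finset (V × V)} {A : Finset V} {e : V × V} :
    e ∈ dirCut E A ↔ e ∈ E ∧ e.1 ∈ A ∧ e.2 ∉ A :=
  mem_filter

lemma sum_powerset_univ_sum_dirCut [Fintype V] {E : Finset (V × V)} (hE : ∀ e ∈ E, e.1 ≠ e.2)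
    (g : V × V → ℝ) :
    4 * ∑ A ∈ (univ : Finset V).powerset, ∑ e ∈ dirCut E A, g e =
      2 ^ Fintype.card V * ∑ e ∈ E, g e := by
  classical
  simp only [dirCut, sum_filter]
  rw [sum_comm, mul_sum, mul_sum]
  refine sum_congr rfl fun e he => ?_
  have hcount := card_filter_mem_notMem_powerset_univ (hE e he)
  rify at hcount
  rw [← sum_filter, sum_const, nsmul_eq_mul, ← hcount]
  ring

abbrev undirectedGraph (R : Finset (V × V)) : SimpleGraph V :=
  SimpleGraph.fromEdgeSet {s | ∃ f ∈ R, s = s(f.1, f.2)}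

lemma exists_mem_of_reachable_undirectedGraph {R : Finset (V × V)} {u v : V}
    (huv : u ≠ v) (h : (undirectedGraph R).Reachable u v) : ∃ f ∈ R, f.1 = v ∨ f.2 = v := by
  obtain ⟨w, hw⟩ :=
    (SimpleGraph.mem_support _).1 (SimpleGraph.mem_support_of_reachable huv.symm h.symm)
  obtain ⟨⟨f, hfR, hf⟩, -⟩ := (SimpleGraph.fromEdgeSet_adj _).1 hw
  exact ⟨f, hfR, by aesop⟩

open scoped Classical in
/-- `b_e(S)`: in the graphic matroid, `e` is spanned by `R` iff its endpoints are connected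
in the undirected graph of `R`. -/
noncomputable def spanProb [Fintype V] (S : Finset (V × V)) (p : V × V → ℝ) (e : V × V) : ℝ :=
  ∑ R ∈ (S.erase e).powerset,
    if (undirectedGraph R).Reachable e.1 e.2 then activeWeight (S.erase e) p R else 0

open scoped Classical in
lemma spanProb_dirCut_le_half [Fintype V] {E : Finset (V × V)} {p : V × V → ℝ}
    (hp0 : ∀ e, 0 ≤ p e) (hp1 : ∀ e, p e ≤ 1)
    (hin : ∀ v : V, ∑ e ∈ E.filter (fun e => e.2 = v), p e ≤ 1 / 2)
    {A : Finset V} {e : V × V} (he : e ∈ dirCut E A) : spanProb (dirCut E A) p e ≤ 1 / 2 := by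
  have hne : e.1 ≠ e.2 := fun h => (mem_dirCut.1 he).2.2 (h ▸ (mem_dirCut.1 he).2.1)
  calc spanProb (dirCut E A) p e ≤ ∑ f ∈ ((dirCut E A).erase e).filter (·.2 = e.2), p f := by
        refine sum_activeWeight_le_of_exists_mem hp0 hp1 (filter_subset _ _) _
          fun R hR hreach => ?_
        obtain ⟨f, hfR, hf⟩ := exists_mem_of_reachable_undirectedGraph hne hreach
        have hfS := hR hfR
        obtain ⟨-, hf1, -⟩ := mem_dirCut.1 (mem_of_mem_erase hfS)
        refine ⟨f, mem_filter.2 ⟨hfS, hf.resolve_left fun h => ?_⟩, hfR⟩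
        exact (mem_dirCut.1 he).2.2 (h ▸ hf1)
    _ ≤ ∑ f ∈ E.filter (·.2 = e.2), p f := by
        refine sum_le_sum_of_subset_of_nonneg (fun f hf => ?_) fun f _ _ => hp0 f
        obtain ⟨hfS, hf2⟩ := mem_filter.1 hf
        exact mem_filter.2 ⟨(mem_dirCut.1 (mem_of_mem_erase hfS)).1, hf2⟩
    _ ≤ 1 / 2 := hin e.2

end DirectedCuts

open scoped Classical in
/-- Directed graph with fractional in-degree at most `1/2` at every vertex, edges
independently active with probability `p e`.  Choosing `A ⊆ V` uniformly at random and
letting `Ŝ = {(u,v) ∈ E : u ∈ A, v ∉ A}`, with `b_e(Ŝ)` the probability that `e` is spanned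
by the active edges of `Ŝ ∖ {e}`, we have
`E_Ŝ[∑_{e ∈ Ŝ} p_e t_e (1 - b_e(Ŝ))] ≥ (1/8) ∑_{e ∈ E} p_e t_e`. -/
theorem stmt_7 {V : Type*} [Fintype V]
    (E : Finset (V × V)) (hE : ∀ e ∈ E, e.1 ≠ e.2)
    (p t : V × V → ℝ) (hp0 : ∀ e, 0 ≤ p e) (hp1 : ∀ e, p e ≤ 1) (ht : ∀ e, 0 ≤ t e)
    (hin : ∀ v : V, ∑ e ∈ E.filter (fun e => e.2 = v), p e ≤ 1 / 2) :
    (1 / 8) * ∑ e ∈ E, p e * t e ≤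
      (∑ A ∈ (Finset.univ : Finset V).powerset,
        ∑ e ∈ E.filter (fun e => e.1 ∈ A ∧ e.2 ∉ A), p e * t e *
          (1 - ∑ R ∈ ((E.filter (fun e => e.1 ∈ A ∧ e.2 ∉ A)).erase e).powerset,
            (if (SimpleGraph.fromEdgeSet {s | ∃ f ∈ R, s = s(f.1, f.2)}).Reachable e.1 e.2
              then (∏ f ∈ R, p f) *
                ∏ f ∈ ((E.filter (fun e => e.1 ∈ A ∧ e.2 ∉ A)).erase e) \ R, (1 - p f)
              else 0)))
        / 2 ^ Fintype.card V := by
  change _ ≤ (∑ A ∈ univ.powerset, ∑ e ∈ dirCut E A, p e * t e * (1 - spanProb (dirCut E A) p e))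
    / 2 ^ Fintype.card V
  rw [le_div_iff₀ (by positivity)]
  calc 1 / 8 * (∑ e ∈ E, p e * t e) * 2 ^ Fintype.card V
      = ∑ A ∈ univ.powerset, ∑ e ∈ dirCut E A, p e * t e * (1 - 1 / 2) := by
        simp only [← sum_mul]
        linarith [sum_powerset_univ_sum_dirCut hE fun e => p e * t e]
    _ ≤ _ := sum_le_sum fun A _ => sum_le_sum fun e he =>
        mul_le_mul_of_nonneg_left (by linarith [spanProb_dirCut_le_half hp0 hp1 hin he])
          (mul_nonneg (hp0 e) (ht e))
end

section
/- Let X be a real-valued random variable with CDF F and let p ∈ (0, 1]. Then for any event H with P(H) = p, E[X | X ≥ F⁻¹(1−p)] ≥ E[X | H], where F⁻¹ is the (generalized) inverse CDF and ties at the threshold are broken so that the conditioning event has probability exactly p. -/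
/-! Since `μ Q = μ H`, the pieces `Q \ H` and `H \ Q` have the same mass. On `Q \ H` we have
`X ≥ q` and on `H \ Q` we have `X ≤ q`, so trading `H \ Q` for `Q \ H` cannot decrease the
integral: `∫_{H \ Q} X ≤ q μ(H \ Q) = q μ(Q \ H) ≤ ∫_{Q \ H} X`. -/

open MeasureTheory Set

namespace MeasureTheory

variable {Ω : Type*} [MeasurableSpace Ω] {μ : Measure Ω} {f : Ω → ℝ} {c : ℝ} {s t : Set Ω}

theorem setIntegral_le_of_le_const_real (hs : MeasurableSet s) (hμs : μ s ≠ ⊤)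
    (hf : ∀ x ∈ s, f x ≤ c) (hfint : IntegrableOn f s μ) :
    ∫ x in s, f x ∂μ ≤ c * μ.real s := by
  simpa [mul_comm] using setIntegral_mono_on hfint (integrableOn_const hμs) hs hf

theorem setIntegral_le_setIntegral_of_superlevel (hs : MeasurableSet s) (ht : MeasurableSet t)
    (hfs : IntegrableOn f s μ) (hft : IntegrableOn f t μ) (hμs : μ s ≠ ⊤) (hts : μ t = μ s)
    (hsub : {x | c < f x} ⊆ s) (hsup : s ⊆ {x | c ≤ f x}) :
    ∫ x in t, f x ∂μ ≤ ∫ x in s, f x ∂μ := by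
  have hμt : μ t ≠ ⊤ := hts ▸ hμs
  have hdiff : μ.real (t \ s) = μ.real (s \ t) := congrArg ENNReal.toReal <|
    measure_sdiff_symm ht.nullMeasurableSet hs.nullMeasurableSet hts
      (measure_ne_top_of_subset inter_subset_left hμt)
  have hle_ts : ∀ x ∈ t \ s, f x ≤ c := fun x hx => not_lt.mp fun h => hx.2 (hsub h)
  have hge_st : ∀ x ∈ s \ t, c ≤ f x := fun x hx => hsup hx.1
  calc ∫ x in t, f x ∂μ = ∫ x in t ∩ s, f x ∂μ + ∫ x in t \ s, f x ∂μ :=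
        (integral_inter_add_sdiff hs hft).symm
    _ ≤ ∫ x in s ∩ t, f x ∂μ + c * μ.real (s \ t) := by
        rw [inter_comm, ← hdiff]
        gcongr
        exact setIntegral_le_of_le_const_real (ht.diff hs)
          (measure_ne_top_of_subset sdiff_subset hμt) hle_ts (hft.mono_set sdiff_subset)
    _ ≤ ∫ x in s ∩ t, f x ∂μ + ∫ x in s \ t, f x ∂μ := by
        gcongr
        exact setIntegral_ge_of_const_le_real (hs.diff ht)
          (measure_ne_top_of_subset sdiff_subset hμs) hge_st (hfs.mono_set sdiff_subset)
    _ = ∫ x in s, f x ∂μ := integral_inter_add_sdiff ht hfs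

end MeasureTheory

open MeasureTheory in
theorem stmt_8_general {Ω : Type*} [MeasurableSpace Ω] (μ : Measure Ω) [IsProbabilityMeasure μ]
    (X : Ω → ℝ) (hX : Integrable X μ)
    (p : ℝ) (hp0 : 0 < p)
    (q : ℝ)
    (Q H : Set Ω) (hQm : MeasurableSet Q) (hHm : MeasurableSet H)
    (hQsub : {ω | q < X ω} ⊆ Q) (hQsup : Q ⊆ {ω | q ≤ X ω})
    (hQp : μ Q = ENNReal.ofReal p) (hHp : μ H = ENNReal.ofReal p) :
    (∫ ω in H, X ω ∂μ) / p ≤ (∫ ω in Q, X ω ∂μ) / p := by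
  have key : ∫ ω in H, X ω ∂μ ≤ ∫ ω in Q, X ω ∂μ :=
    setIntegral_le_setIntegral_of_superlevel hQm hHm hX.integrableOn hX.integrableOn
      (measure_ne_top μ Q) (hHp.trans hQp.symm) hQsub hQsup
  exact div_le_div_of_nonneg_right key hp0.le

open MeasureTheory in
/-- Let `X` be an integrable random variable and `p ∈ (0,1]`.  Let `q` be the generalized
inverse CDF value `F⁻¹(1-p)`, characterized by `μ{X > q} ≤ p ≤ μ{X ≥ q}`, and let `Q` be
the top `p`-quantile event: `{X > q} ⊆ Q ⊆ {X ≥ q}` with ties broken so that `μ Q = p`.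
Then for any event `H` with `μ H = p`, `E[X | Q] ≥ E[X | H]`. -/
theorem stmt_8 {Ω : Type*} [MeasurableSpace Ω] (μ : Measure Ω) [IsProbabilityMeasure μ]
    (X : Ω → ℝ) (hX : Integrable X μ) (hXm : Measurable X)
    (p : ℝ) (hp0 : 0 < p) (hp1 : p ≤ 1)
    (q : ℝ)
    (hq1 : μ {ω | q < X ω} ≤ ENNReal.ofReal p)
    (hq2 : ENNReal.ofReal p ≤ μ {ω | q ≤ X ω})
    (Q H : Set Ω) (hQm : MeasurableSet Q) (hHm : MeasurableSet H)
    (hQsub : {ω | q < X ω} ⊆ Q) (hQsup : Q ⊆ {ω | q ≤ X ω})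
    (hQp : μ Q = ENNReal.ofReal p) (hHp : μ H = ENNReal.ofReal p) :
    (∫ ω in H, X ω ∂μ) / p ≤ (∫ ω in Q, X ω ∂μ) / p :=
  stmt_8_general μ X hX p hp0 q Q H hQm hHm hQsub hQsup hQp hHp
end

section
/- Given a matroid M = (N, I) and independent nonnegative random weights X_i for i ∈ N, define p_i = P[i ∈ I*] where I* is the maximum-weight basis (with a fixed tie-breaking rule). Then the vector p lies in the matroid polytope P_M, and OPT := E[max_{I ∈ I} ∑_{i∈I} X_i] = ∑_i p_i · E[X_i | i ∈ I*] ≤ ∑_i p_i t_i, where t_i = E[X_i | X_i ≥ F_i⁻¹(1 − p_i)]. -/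
/-!
Every realisation of `I*` is independent, so its trace on `S` is an independent subset of `S`
and has at most `rank S` elements; averaging over `ω` puts `p` in the matroid polytope.
Exchanging the order of summation writes `OPT` as `∑ᵢ E[Xᵢ; i ∈ I*]`. Finally, among all
fractional events of probability `pᵢ`, the expectation of `Xᵢ` on the event is largest for the
top `pᵢ`-quantile `gᵢ`, since `(gᵢ - 1{i ∈ I*}) (Xᵢ - qᵢ) ≥ 0` pointwise.
-/

open Finset

section WeightedSums

variable {Ω : Type*} [Fintype Ω] (μ : Ω → ℝ)

theorem sum_mul_sum_mem_eq_sum_sum_ite {N : Type*} [Fintype N] [DecidableEq N]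
    (I : Ω → Finset N) (f : N → Ω → ℝ) :
    ∑ ω, μ ω * ∑ i ∈ I ω, f i ω = ∑ i, ∑ ω, μ ω * (if i ∈ I ω then 1 else 0) * f i ω := by
  rw [Finset.sum_comm]
  refine Finset.sum_congr rfl fun ω _ => ?_
  simp only [Finset.mul_sum, mul_ite, ite_mul, mul_one, mul_zero, zero_mul]
  rw [Finset.sum_ite_mem, univ_inter]

theorem sum_mul_mul_eq_zero_of_sum_eq_zero {w : Ω → ℝ} (hw : ∀ ω, 0 ≤ w ω)
    (h : ∑ ω, w ω = 0) (f : Ω → ℝ) : ∑ ω, w ω * f ω = 0 := by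
  have hzero := (Finset.sum_eq_zero_iff_of_nonneg fun ω _ => hw ω).mp h
  exact Finset.sum_eq_zero fun ω hω => by rw [hzero ω hω, zero_mul]

/-- The bathtub principle. -/
theorem sum_mul_mul_le_of_threshold (hμ : ∀ ω, 0 ≤ μ ω) {e g X : Ω → ℝ} {q : ℝ}
    (he : ∀ ω, 0 ≤ e ω ∧ e ω ≤ 1)
    (hup : ∀ ω, q < X ω → g ω = 1) (hdown : ∀ ω, X ω < q → g ω = 0)
    (hmass : ∑ ω, μ ω * e ω = ∑ ω, μ ω * g ω) :
    ∑ ω, μ ω * e ω * X ω ≤ ∑ ω, μ ω * g ω * X ω := by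
  have hpointwise : ∀ ω, 0 ≤ μ ω * ((g ω - e ω) * (X ω - q)) := by
    intro ω
    refine mul_nonneg (hμ ω) ?_
    obtain ⟨he0, he1⟩ := he ω
    rcases lt_trichotomy (X ω) q with hlt | heq | hgt
    · rw [hdown ω hlt]; nlinarith
    · rw [heq, sub_self, mul_zero]
    · rw [hup ω hgt]; nlinarith
  have hexpand : ∑ ω, μ ω * ((g ω - e ω) * (X ω - q))
      = (∑ ω, μ ω * g ω * X ω - ∑ ω, μ ω * e ω * X ω)
        - q * (∑ ω, μ ω * g ω - ∑ ω, μ ω * e ω) := by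
    simp only [Finset.mul_sum, ← Finset.sum_sub_distrib]
    exact Finset.sum_congr rfl fun ω _ => by ring
  have := Finset.sum_nonneg fun ω (_ : ω ∈ univ) => hpointwise ω
  rw [hexpand, hmass, sub_self, mul_zero, sub_zero] at this
  linarith

end WeightedSums

theorem card_inter_le_sup_card_filter_powerset {N : Type*} {Ind : Finset N → Prop}
    [DecidablePred Ind] [DecidableEq N] (hdown : ∀ I J : Finset N, I ⊆ J → Ind J → Ind I)
    (S : Finset N) {J : Finset N} (hJ : Ind J) :
    (S ∩ J).card ≤ (S.powerset.filter Ind).sup Finset.card :=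
  Finset.le_sup (f := Finset.card) <| Finset.mem_filter.mpr
    ⟨Finset.mem_powerset.mpr inter_subset_left, hdown _ _ inter_subset_right hJ⟩

theorem sum_prob_mem_le_rank {N : Type*} {Ω : Type*} [Fintype Ω] [DecidableEq N]
    {μ : Ω → ℝ} (hμ0 : ∀ ω, 0 ≤ μ ω) (hμ1 : ∑ ω, μ ω = 1)
    {Ind : Finset N → Prop} [DecidablePred Ind]
    (hdown : ∀ I J : Finset N, I ⊆ J → Ind J → Ind I)
    {I : Ω → Finset N} (hI : ∀ ω, Ind (I ω)) (S : Finset N) :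
    ∑ i ∈ S, ∑ ω, μ ω * (if i ∈ I ω then 1 else 0)
      ≤ (((S.powerset.filter Ind).sup Finset.card : ℕ) : ℝ) := by
  calc ∑ i ∈ S, ∑ ω, μ ω * (if i ∈ I ω then 1 else 0)
      = ∑ ω, μ ω * ((S ∩ I ω).card : ℝ) := by
        rw [Finset.sum_comm]
        refine Finset.sum_congr rfl fun ω _ => ?_
        rw [← Finset.mul_sum, Finset.sum_boole, Finset.filter_mem_eq_inter]
    _ ≤ ∑ ω, μ ω * (((S.powerset.filter Ind).sup Finset.card : ℕ) : ℝ) := by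
        gcongr with ω
        · exact hμ0 ω
        · exact_mod_cast card_inter_le_sup_card_filter_powerset hdown S (hI ω)
    _ = (((S.powerset.filter Ind).sup Finset.card : ℕ) : ℝ) := by
        rw [← Finset.sum_mul, hμ1, one_mul]

open scoped Classical in
theorem stmt_9_general {N : Type*} [Fintype N] {Ω : Type*} [Fintype Ω]
    (μ : Ω → ℝ) (hμ0 : ∀ ω, 0 ≤ μ ω) (hμ1 : ∑ ω, μ ω = 1)
    (Ind : Finset N → Prop)
    (hdown : ∀ I J : Finset N, I ⊆ J → Ind J → Ind I)
    (X : N → Ω → ℝ)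
    (Istar : Ω → Finset N) (hIstarInd : ∀ ω, Ind (Istar ω))
    (p : N → ℝ) (hp : ∀ i, p i = ∑ ω, μ ω * (if i ∈ Istar ω then 1 else 0))
    (t q : N → ℝ) (g : N → Ω → ℝ)
    (hgup : ∀ i ω, q i < X i ω → g i ω = 1)
    (hgdown : ∀ i ω, X i ω < q i → g i ω = 0)
    (hgp : ∀ i, ∑ ω, μ ω * g i ω = p i)
    (hgt : ∀ i, t i * p i = ∑ ω, μ ω * g i ω * X i ω) :
    (∀ S : Finset N, ∑ i ∈ S, p i ≤ (((S.powerset.filter Ind).sup Finset.card : ℕ) : ℝ))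
    ∧ (∑ ω, μ ω * ∑ i ∈ Istar ω, X i ω
        = ∑ i, p i * ((∑ ω, μ ω * (if i ∈ Istar ω then 1 else 0) * X i ω) / p i))
    ∧ (∑ ω, μ ω * ∑ i ∈ Istar ω, X i ω ≤ ∑ i, p i * t i) := by
  have hmem01 : ∀ i ω, 0 ≤ (if i ∈ Istar ω then (1 : ℝ) else 0)
      ∧ (if i ∈ Istar ω then (1 : ℝ) else 0) ≤ 1 := fun i ω => by split_ifs <;> norm_num
  refine ⟨fun S => ?_, ?_, ?_⟩
  · simp only [hp]
    exact sum_prob_mem_le_rank hμ0 hμ1 hdown hIstarInd S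
  · rw [sum_mul_sum_mem_eq_sum_sum_ite]
    refine Finset.sum_congr rfl fun i _ => (mul_div_cancel_of_imp' fun hpi => ?_).symm
    exact sum_mul_mul_eq_zero_of_sum_eq_zero (fun ω => mul_nonneg (hμ0 ω) (hmem01 i ω).1)
      ((hp i).symm.trans hpi) (X i)
  · rw [sum_mul_sum_mem_eq_sum_sum_ite]
    gcongr with i
    rw [mul_comm, hgt i]
    exact sum_mul_mul_le_of_threshold μ hμ0 (hmem01 i) (hgup i) (hgdown i)
      ((hp i).symm.trans (hgp i).symm)

open scoped Classical in
/-- Ex-ante relaxation for matroids (Lemma 4.1).  Over a finite probability space, let `I*`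
be the maximum-weight independent set (fixed tie-breaking) of a matroid given by an
independence predicate `Ind`, and let `p i = P[i ∈ I*]`.  Let `t i` be the expectation of
`X i` conditioned on its top `p i`-quantile, characterized by a fractional event `g i`
(tie-breaking at the threshold `q i` so that the event has probability exactly `p i`).
Then `p` lies in the matroid polytope (`∑_{i∈S} p i ≤ rank S` for all `S`),
`OPT = E[∑_{i ∈ I*} X i] = ∑_i p i · E[X i | i ∈ I*]`, and `OPT ≤ ∑_i p i · t i`. -/
theorem stmt_9 {N : Type*} [Fintype N] {Ω : Type*} [Fintype Ω]
    (μ : Ω → ℝ) (hμ0 : ∀ ω, 0 ≤ μ ω) (hμ1 : ∑ ω, μ ω = 1)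
    (Ind : Finset N → Prop) (hempty : Ind ∅)
    (hdown : ∀ I J : Finset N, I ⊆ J → Ind J → Ind I)
    (hexch : ∀ I J : Finset N, Ind I → Ind J → I.card < J.card →
      ∃ x ∈ J \ I, Ind (insert x I))
    (X : N → Ω → ℝ) (hX0 : ∀ i ω, 0 ≤ X i ω)
    (Istar : Ω → Finset N) (hIstarInd : ∀ ω, Ind (Istar ω))
    (hIstarOpt : ∀ ω, ∀ I : Finset N, Ind I → ∑ i ∈ I, X i ω ≤ ∑ i ∈ Istar ω, X i ω)
    (p : N → ℝ) (hp : ∀ i, p i = ∑ ω, μ ω * (if i ∈ Istar ω then 1 else 0))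
    (t q : N → ℝ) (g : N → Ω → ℝ)
    (hg01 : ∀ i ω, 0 ≤ g i ω ∧ g i ω ≤ 1)
    (hgup : ∀ i ω, q i < X i ω → g i ω = 1)
    (hgdown : ∀ i ω, X i ω < q i → g i ω = 0)
    (hgp : ∀ i, ∑ ω, μ ω * g i ω = p i)
    (hgt : ∀ i, t i * p i = ∑ ω, μ ω * g i ω * X i ω) :
    (∀ S : Finset N, ∑ i ∈ S, p i ≤ (((S.powerset.filter Ind).sup Finset.card : ℕ) : ℝ))
    ∧ (∑ ω, μ ω * ∑ i ∈ Istar ω, X i ω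
        = ∑ i, p i * ((∑ ω, μ ω * (if i ∈ Istar ω then 1 else 0) * X i ω) / p i))
    ∧ (∑ ω, μ ω * ∑ i ∈ Istar ω, X i ω ≤ ∑ i, p i * t i) :=
  stmt_9_general μ hμ0 hμ1 Ind hdown X Istar hIstarInd p hp t q g hgup hgdown hgp hgt
end

section
/- Let X_1, …, X_n be independent nonnegative random variables and let T ≥ 0 satisfy P[fewer than k of the X_i exceed T] = 1/2. Consider the online algorithm that accepts item i iff X_i > T and fewer than k items have been accepted so far. Then the expected total value accepted is at least (1/2) · E[max_{S : |S| ≤ k} ∑_{i ∈ S} X_i]. -/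
/-!
The prophet can take at most `k` items, each worth at most `T + (X i - T)⁺`, so
`E[OPT] ≤ k T + ∑ i, E[(X i - T)⁺]`. On the other hand the algorithm collects `k T` whenever at
least `k` items exceed `T`, and the surplus `(X i - T)⁺` of item `i` whenever fewer than `k` of the
*other* items exceed `T`. The latter event is independent of `X i` and contains the event that
fewer than `k` items exceed `T`, which has probability `1/2`. Hence
`E[ALG] ≥ k T / 2 + (1/2) ∑ i, E[(X i - T)⁺] ≥ E[OPT] / 2`.
-/

/-- One step of the static-threshold online algorithm for a `k`-uniform constraint:
state is (number accepted so far, value accepted so far); an arriving item of value `x`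
is accepted iff `x` exceeds the threshold `T` and fewer than `k` items were accepted. -/
noncomputable def algStep (T : ℝ) (k : ℕ) (s : ℕ × ℝ) (x : ℝ) : ℕ × ℝ :=
  if T < x ∧ s.1 < k then (s.1 + 1, s.2 + x) else s

/-- Total value accepted by the static-threshold algorithm on the value sequence `xs`
(items arrive in the order of the list). -/
noncomputable def algValue (T : ℝ) (k : ℕ) (xs : List ℝ) : ℝ :=
  (xs.foldl (algStep T k) (0, 0)).2

/-- The prophet's benchmark: the maximum over subsets of size at most `k` of the total value. -/
noncomputable def prophetValue {n : ℕ} (k : ℕ) (x : Fin n → ℝ) : ℝ :=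
  (((Finset.univ : Finset (Fin n)).powerset.filter fun S => S.card ≤ k).sup'
    ⟨∅, by simp⟩ fun S => ∑ i ∈ S, x i)

open Finset

section ProductExpectation

variable {ι α : Type*} [Fintype ι] [DecidableEq ι]

lemma prod_update_mul (ν : ι → α → ℝ) (ω : ι → α) (i : ι) (a : α) :
    (∏ j, ν j (Function.update ω i a j)) * ν i (ω i) = (∏ j, ν j (ω j)) * ν i a := by
  rw [← mul_prod_erase univ _ (mem_univ i),
    ← mul_prod_erase univ (fun j => ν j (ω j)) (mem_univ i),
    prod_congr rfl fun j hj => by rw [Function.update_of_ne (ne_of_mem_erase hj)]]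
  simp only [Function.update_self]
  ring

variable [Fintype α]

noncomputable def piExpect (ν : ι → α → ℝ) (F : (ι → α) → ℝ) : ℝ :=
  ∑ ω : ι → α, (∏ i, ν i (ω i)) * F ω

variable {ν : ι → α → ℝ}

lemma piExpect_mono (hν0 : ∀ i a, 0 ≤ ν i a) {F G : (ι → α) → ℝ} (h : ∀ ω, F ω ≤ G ω) :
    piExpect ν F ≤ piExpect ν G :=
  sum_le_sum fun ω _ => mul_le_mul_of_nonneg_left (h ω) (prod_nonneg fun i _ => hν0 i (ω i))

lemma piExpect_add (F G : (ι → α) → ℝ) :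
    piExpect ν (fun ω => F ω + G ω) = piExpect ν F + piExpect ν G := by
  simp only [piExpect, mul_add, sum_add_distrib]

lemma piExpect_sub (F G : (ι → α) → ℝ) :
    piExpect ν (fun ω => F ω - G ω) = piExpect ν F - piExpect ν G := by
  simp only [piExpect, mul_sub, sum_sub_distrib]

lemma piExpect_const_mul (c : ℝ) (F : (ι → α) → ℝ) :
    piExpect ν (fun ω => c * F ω) = c * piExpect ν F := by
  simp only [piExpect, mul_sum, mul_left_comm c]

lemma piExpect_sum {κ : Type*} (s : Finset κ) (F : κ → (ι → α) → ℝ) :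
    piExpect ν (fun ω => ∑ j ∈ s, F j ω) = ∑ j ∈ s, piExpect ν (F j) := by
  simp only [piExpect, mul_sum]
  exact sum_comm

lemma piExpect_const (hν1 : ∀ i, ∑ a, ν i a = 1) (c : ℝ) : piExpect ν (fun _ => c) = c := by
  rw [piExpect, ← sum_mul, ← Fintype.prod_sum]
  simp [hν1]

lemma piExpect_resample (hν1 : ∀ i, ∑ a, ν i a = 1) (i : ι) (F : (ι → α) → ℝ) :
    piExpect ν (fun ω => ∑ a, ν i a * F (Function.update ω i a)) = piExpect ν F := by
  have hinv : Function.Involutive fun p : (ι → α) × α => (Function.update p.1 i p.2, p.1 i) := by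
    rintro ⟨ω, a⟩
    simp
  calc piExpect ν (fun ω => ∑ a, ν i a * F (Function.update ω i a))
      = ∑ p : (ι → α) × α, (∏ j, ν j (p.1 j)) * (ν i p.2 * F (Function.update p.1 i p.2)) := by
        simp only [piExpect, mul_sum, Fintype.sum_prod_type]
    _ = ∑ p : (ι → α) × α, (∏ j, ν j (p.1 j)) * ν i p.2 * F p.1 := by
        refine (Fintype.sum_bijective _ hinv.bijective _ _ fun ⟨ω, a⟩ => ?_).symm
        simp only [Function.update_idem, Function.update_eq_self]
        rw [← prod_update_mul ν ω i a]
        ring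
    _ = piExpect ν F := by
        simp only [piExpect, Fintype.sum_prod_type, mul_right_comm _ _ (F _), ← mul_sum, hν1,
          mul_one]

lemma piExpect_coord_mul (hν1 : ∀ i, ∑ a, ν i a = 1) (i : ι) (f : α → ℝ) {g : (ι → α) → ℝ}
    (hg : ∀ ω a, g (Function.update ω i a) = g ω) :
    piExpect ν (fun ω => f (ω i) * g ω) = (∑ a, ν i a * f a) * piExpect ν g := by
  rw [← piExpect_resample hν1 i]
  simp only [Function.update_self, hg, ← mul_assoc, ← sum_mul]
  exact piExpect_const_mul _ g

lemma piExpect_coord (hν1 : ∀ i, ∑ a, ν i a = 1) (i : ι) (f : α → ℝ) :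
    piExpect ν (fun ω => f (ω i)) = ∑ a, ν i a * f a := by
  simpa [piExpect_const hν1] using piExpect_coord_mul hν1 i f (g := fun _ => 1) fun _ _ => rfl

end ProductExpectation

section Algorithm

variable (T : ℝ) (k : ℕ)

lemma foldl_algStep_fst (xs : List ℝ) {s : ℕ × ℝ} (hs : s.1 ≤ k) :
    (xs.foldl (algStep T k) s).1
      = min (s.1 + (xs.map fun a => if T < a then 1 else 0).sum) k := by
  induction xs generalizing s with
  | nil => simpa using hs
  | cons x xs ih =>
    have hs' : (algStep T k s x).1 ≤ k := by
      unfold algStep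
      split_ifs <;> omega
    rw [List.foldl_cons, ih hs', List.map_cons, List.sum_cons]
    by_cases hx : T < x <;> by_cases hsk : s.1 < k <;>
      simp only [algStep, hx, hsk, and_self, and_true, and_false, if_true, if_false] <;> omega

lemma foldl_algStep_snd_sub_le (xs : List ℝ) (s : ℕ × ℝ) :
    s.2 - s.1 * T ≤ (xs.foldl (algStep T k) s).2 - (xs.foldl (algStep T k) s).1 * T := by
  induction xs generalizing s with
  | nil => exact le_rfl
  | cons x xs ih =>
    refine le_trans ?_ (ih (algStep T k s x))
    unfold algStep
    split_ifs with h
    · push_cast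
      linarith [h.1]
    · exact le_rfl

lemma foldl_algStep_snd_of_le (xs : List ℝ) {s : ℕ × ℝ}
    (hs : s.1 + (xs.map fun a => if T < a then 1 else 0).sum ≤ k) :
    (xs.foldl (algStep T k) s).2 = s.2 + (xs.map fun a => if T < a then a else 0).sum := by
  induction xs generalizing s with
  | nil => simp
  | cons x xs ih =>
    simp only [List.map_cons, List.sum_cons] at hs ⊢
    rw [List.foldl_cons]
    by_cases hx : T < x
    · simp only [hx, if_true] at hs ⊢
      rw [algStep, if_pos ⟨hx, by omega⟩, ih (by simp only; omega)]
      ring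
    · simp only [hx, if_false, zero_add] at hs ⊢
      rw [algStep, if_neg fun h => hx h.1, ih hs]

variable {n : ℕ} (x : Fin n → ℝ)

lemma sum_map_ofFn {β : Type*} [AddCommMonoid β] (f : ℝ → β) :
    ((List.ofFn x).map f).sum = ∑ i, f (x i) := by
  rw [List.map_ofFn, List.sum_ofFn]
  rfl

lemma sum_map_indicator_ofFn_eq_card :
    ((List.ofFn x).map fun a => if T < a then 1 else 0).sum = #{i | T < x i} := by
  rw [sum_map_ofFn, card_filter]

lemma algValue_ofFn_of_card_le (hC : #{i | T < x i} ≤ k) :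
    algValue T k (List.ofFn x) = ∑ i with T < x i, x i := by
  have hfits : 0 + ((List.ofFn x).map fun a => if T < a then 1 else 0).sum ≤ k := by
    rwa [sum_map_indicator_ofFn_eq_card, zero_add]
  rw [algValue, foldl_algStep_snd_of_le T k _ hfits, sum_map_ofFn, sum_filter, zero_add]

lemma mul_le_algValue_ofFn_of_le_card (hC : k ≤ #{i | T < x i}) :
    k * T ≤ algValue T k (List.ofFn x) := by
  have hcount := foldl_algStep_fst T k (List.ofFn x) (s := (0, 0)) (Nat.zero_le k)
  rw [sum_map_indicator_ofFn_eq_card, zero_add, min_eq_right hC] at hcount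
  have := foldl_algStep_snd_sub_le T k (List.ofFn x) (0, 0)
  rw [hcount] at this
  simp only [CharP.cast_eq_zero, zero_mul, sub_zero] at this
  rw [algValue]
  linarith

end Algorithm

lemma algValue_ofFn_ge {n : ℕ} (T : ℝ) (k : ℕ) (hT : 0 ≤ T) (x : Fin n → ℝ) :
    k * T * (1 - if #{i | T < x i} < k then 1 else 0)
      + ∑ i, (x i - T)⁺ * (if #{j ∈ univ.erase i | T < x j} < k then 1 else 0)
      ≤ algValue T k (List.ofFn x) := by
  rcases le_or_gt #{i | T < x i} k with hC | hC
  · have hthreshold :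
        k * T * (1 - if #{i | T < x i} < k then 1 else 0) ≤ #{i | T < x i} * T := by
      split_ifs with hlt
      · simp only [sub_self, mul_zero]
        positivity
      · rw [sub_zero, mul_one, le_antisymm hC (not_lt.1 hlt)]
    have hsurplus : ∑ i, (x i - T)⁺ = ∑ i with T < x i, (x i - T) := by
      rw [sum_filter]
      refine sum_congr rfl fun i _ => ?_
      split_ifs with hi
      · exact posPart_eq_self.2 (sub_nonneg.2 hi.le)
      · exact posPart_eq_zero.2 (by linarith)
    calc _ ≤ #{i | T < x i} * T + ∑ i, (x i - T)⁺ := by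
          refine add_le_add hthreshold (sum_le_sum fun i _ => ?_)
          split_ifs
          · rw [mul_one]
          · rw [mul_zero]
            exact posPart_nonneg _
      _ = algValue T k (List.ofFn x) := by
          rw [algValue_ofFn_of_card_le T k x hC, hsurplus, sum_sub_distrib, sum_const, nsmul_eq_mul]
          ring
  · have hblocked : ∀ i, ¬ #{j ∈ univ.erase i | T < x j} < k := fun i => by
      rw [filter_erase]
      have := pred_card_le_card_erase (s := ({i | T < x i} : Finset (Fin n))) (a := i)
      omega
    simp only [hblocked, if_false, mul_zero, sum_const_zero, add_zero, not_lt.2 hC.le, sub_zero,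
      mul_one]
    exact mul_le_algValue_ofFn_of_le_card T k x hC.le

lemma prophetValue_le {n : ℕ} (k : ℕ) {T : ℝ} (hT : 0 ≤ T) (x : Fin n → ℝ) :
    prophetValue k x ≤ k * T + ∑ i, (x i - T)⁺ := by
  refine sup'_le _ _ fun S hS => ?_
  have hcard : (#S : ℝ) ≤ k := by exact_mod_cast (mem_filter.1 hS).2
  calc ∑ i ∈ S, x i ≤ ∑ i ∈ S, (T + (x i - T)⁺) :=
        sum_le_sum fun i _ => by linarith [le_posPart (x i - T)]
    _ = #S * T + ∑ i ∈ S, (x i - T)⁺ := by rw [sum_add_distrib, sum_const, nsmul_eq_mul]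
    _ ≤ k * T + ∑ i, (x i - T)⁺ := by
        gcongr
        exact subset_univ S

section Expectations

variable {n : ℕ} {α : Type*} [Fintype α] {ν : Fin n → α → ℝ} (vals : Fin n → α → ℝ) (k : ℕ)
  {T : ℝ}

lemma piExpect_prophetValue_le (hν0 : ∀ i a, 0 ≤ ν i a) (hν1 : ∀ i, ∑ a, ν i a = 1)
    (hT : 0 ≤ T) :
    piExpect ν (fun ω => prophetValue k fun i => vals i (ω i))
      ≤ k * T + ∑ i, ∑ a, ν i a * (vals i a - T)⁺ :=
  calc _ ≤ piExpect ν (fun ω => k * T + ∑ i, (vals i (ω i) - T)⁺) :=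
        piExpect_mono hν0 fun ω => prophetValue_le k hT _
    _ = k * T + ∑ i, ∑ a, ν i a * (vals i a - T)⁺ := by
        rw [piExpect_add, piExpect_const hν1, piExpect_sum]
        exact congrArg _ (sum_congr rfl fun i _ => piExpect_coord hν1 i fun a => (vals i a - T)⁺)

lemma le_piExpect_algValue (hν0 : ∀ i a, 0 ≤ ν i a) (hν1 : ∀ i, ∑ a, ν i a = 1) (hT : 0 ≤ T)
    {p : ℝ}
    (hp : piExpect ν (fun ω => if #{i | T < vals i (ω i)} < k then 1 else 0) = p) :
    k * T * (1 - p) + p * ∑ i, ∑ a, ν i a * (vals i a - T)⁺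
      ≤ piExpect ν (fun ω => algValue T k (List.ofFn fun i => vals i (ω i))) := by
  refine le_trans ?_ (piExpect_mono hν0 fun ω => algValue_ofFn_ge T k hT fun i => vals i (ω i))
  rw [piExpect_add, piExpect_const_mul, piExpect_sub, piExpect_const hν1, hp, piExpect_sum,
    mul_sum]
  refine add_le_add le_rfl (sum_le_sum fun i _ => ?_)
  rw [piExpect_coord_mul hν1 i (fun a => (vals i a - T)⁺) fun ω a => by
    rw [filter_congr fun j hj => by rw [Function.update_of_ne (ne_of_mem_erase hj)]], mul_comm]
  refine mul_le_mul_of_nonneg_left (hp ▸ piExpect_mono hν0 fun ω => ?_)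
    (sum_nonneg fun a _ => mul_nonneg (hν0 i a) (posPart_nonneg _))
  have hothers : #{j ∈ univ.erase i | T < vals j (ω j)} ≤ #{j | T < vals j (ω j)} :=
    card_le_card (filter_subset_filter _ (erase_subset _ _))
  split_ifs with hall hrest
  · exact le_rfl
  · exact absurd (hothers.trans_lt hall) hrest
  · exact zero_le_one
  · exact le_rfl

end Expectations

theorem stmt_10_general {n m : ℕ} (k : ℕ)
    (vals : Fin n → Fin m → ℝ)
    (ν : Fin n → Fin m → ℝ) (hν0 : ∀ i a, 0 ≤ ν i a) (hν1 : ∀ i, ∑ a, ν i a = 1)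
    (T : ℝ) (hT : 0 ≤ T)
    (hhalf : ∑ ω : Fin n → Fin m, (∏ i, ν i (ω i)) *
        (if ((Finset.univ : Finset (Fin n)).filter fun i => T < vals i (ω i)).card < k
          then (1 : ℝ) else 0) = 1 / 2) :
    (1 / 2) * ∑ ω : Fin n → Fin m,
        (∏ i, ν i (ω i)) * prophetValue k (fun i => vals i (ω i))
      ≤ ∑ ω : Fin n → Fin m, (∏ i, ν i (ω i)) *
          algValue T k (List.ofFn fun i => vals i (ω i)) := by
  have hprophet := piExpect_prophetValue_le vals k hν0 hν1 hT
  have halg := le_piExpect_algValue vals k hν0 hν1 hT hhalf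
  change (1 / 2) * piExpect ν _ ≤ piExpect ν _
  linarith

/-- Probabilistic-threshold prophet inequality for the `k`-uniform matroid:
`X_1, …, X_n` independent (finitely supported, encoded by a product measure on
`Fin n → Fin m` with marginals `ν i` and values `vals i`), `T ≥ 0` with
`P[fewer than k of the X_i exceed T] = 1/2`.  Then the online algorithm accepting item `i`
iff `X i > T` and fewer than `k` items were accepted obtains at least
`(1/2)·E[max_{|S| ≤ k} ∑_{i∈S} X i]`. -/
theorem stmt_10 {n m : ℕ} (k : ℕ) (hk : 0 < k)
    (vals : Fin n → Fin m → ℝ) (hvals : ∀ i a, 0 ≤ vals i a)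
    (ν : Fin n → Fin m → ℝ) (hν0 : ∀ i a, 0 ≤ ν i a) (hν1 : ∀ i, ∑ a, ν i a = 1)
    (T : ℝ) (hT : 0 ≤ T)
    (hhalf : ∑ ω : Fin n → Fin m, (∏ i, ν i (ω i)) *
        (if ((Finset.univ : Finset (Fin n)).filter fun i => T < vals i (ω i)).card < k
          then (1 : ℝ) else 0) = 1 / 2) :
    (1 / 2) * ∑ ω : Fin n → Fin m,
        (∏ i, ν i (ω i)) * prophetValue k (fun i => vals i (ω i))
      ≤ ∑ ω : Fin n → Fin m, (∏ i, ν i (ω i)) *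
          algValue T k (List.ofFn fun i => vals i (ω i)) :=
  stmt_10_general k vals ν hν0 hν1 T hT hhalf
end

section
/- Let X_1, …, X_n be nonnegative random variables accepted one at a time under a matroid constraint, and let X'_i be the coupled Bernoulli variables where X'_i = t_i iff X_i ≥ F_i⁻¹(1 − p_i) and X'_i = 0 otherwise, with t_i = E[X_i | X_i ≥ F_i⁻¹(1−p_i)] ≥ F_i⁻¹(1−p_i). Then for any fixed threshold algorithm with thresholds T_i ∈ {t_i, ∞} run on both coupled instances (in the same arrival order), the set of items accepted is the same, and the expected value of the algorithm on X is at least its expected value on X'. -/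
/-! Under the coupling an item passes its threshold in one instance iff it does in the other,
so both runs accept the same set. For the values, fix an item `i` and resample its value with
the other coordinates frozen: whether `i` is accepted depends on its own value only through
whether it passes, so its expected contribution is (probability that the other coordinates
let it in) × E[value of `i`; `i` passes]. Since `t i · P(pass) = E[X i; pass]`, the two
expectations are in fact equal. -/

open scoped Classical

/-- The greedy fixed-threshold algorithm: items arrive in the order of the list `order`;
an item is accepted iff it passes its threshold (`pass i`) and the accepted set stays
independent (`Ind`). -/
noncomputable def greedyAccept {N : Type*} [DecidableEq N]
    (Ind : Finset N → Prop) (pass : N → Prop) (order : List N) : Finset N :=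
  order.foldl (fun A i => if pass i ∧ Ind (insert i A) then insert i A else A) ∅

section Greedy

variable {N : Type*} [DecidableEq N] (Ind : Finset N → Prop) (order : List N)

lemma mem_or_pass_of_mem_foldl {pass : N → Prop} {A : Finset N} {i : N}
    (h : i ∈ order.foldl (fun A i => if pass i ∧ Ind (insert i A) then insert i A else A) A) :
    i ∈ A ∨ pass i := by
  induction order generalizing A with
  | nil => exact Or.inl h
  | cons a l ih =>
    rcases ih h with hA | hpass
    · dsimp only at hA
      split_ifs at hA with hacc
      · rcases Finset.mem_insert.1 hA with rfl | hA
        exacts [Or.inr hacc.1, Or.inl hA]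
      · exact Or.inl hA
    · exact Or.inr hpass

lemma pass_of_mem_greedyAccept {pass : N → Prop} {i : N}
    (h : i ∈ greedyAccept Ind pass order) : pass i :=
  (mem_or_pass_of_mem_foldl Ind order h).resolve_left (Finset.notMem_empty i)

lemma mem_greedyAccept_update_iff (pass : N → Prop) (i : N) (p : Prop) :
    i ∈ greedyAccept Ind (Function.update pass i p) order ↔
      p ∧ i ∈ greedyAccept Ind (Function.update pass i True) order := by
  by_cases hp : p
  · simp [eq_true hp]
  · exact iff_of_false (fun h => hp (by simpa using pass_of_mem_greedyAccept Ind order h))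
      (fun h => hp h.1)

end Greedy

section Resampling

variable {ι α R : Type*} [Fintype ι] [DecidableEq ι] [CommSemiring R]
  (ν : ι → α → R)

lemma mul_prod_eq_mul_prod_update (ω : ι → α) (i : ι) (a : α) :
    ν i a * ∏ j, ν j (ω j) = ν i (ω i) * ∏ j, ν j (Function.update ω i a j) := by
  simp_rw [Function.apply_update (fun j => ν j) ω i a,
    Finset.prod_update_of_mem (Finset.mem_univ i),
    Finset.prod_eq_mul_prod_sdiff_singleton_of_mem (Finset.mem_univ i) (fun j => ν j (ω j))]
  ring

lemma sum_prod_mul_eq_sum_prod_mul_sum_update [Fintype α] {i : ι} (hν : ∑ a, ν i a = 1)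
    (f : (ι → α) → R) :
    ∑ ω, (∏ j, ν j (ω j)) * f ω =
      ∑ ω, (∏ j, ν j (ω j)) * ∑ a, ν i a * f (Function.update ω i a) := by
  have swap : Function.Involutive
      (fun p : (ι → α) × α => (Function.update p.1 i p.2, p.1 i)) := fun p => by
    simp [Function.update_idem]
  calc ∑ ω, (∏ j, ν j (ω j)) * f ω
      = ∑ p : (ι → α) × α, ν i p.2 * (∏ j, ν j (p.1 j)) * f p.1 := by
        simp_rw [Fintype.sum_prod_type, ← Finset.sum_mul, hν, one_mul]
    _ = ∑ p : (ι → α) × α,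
          ν i p.2 * (∏ j, ν j (p.1 j)) * f (Function.update p.1 i p.2) := by
        refine Fintype.sum_bijective _ swap.bijective _ _ fun p => ?_
        simp only [Function.update_idem, Function.update_eq_self,
          mul_prod_eq_mul_prod_update ν p.1 i p.2]
    _ = _ := by
        simp_rw [Fintype.sum_prod_type, Finset.mul_sum]
        exact Finset.sum_congr rfl fun ω _ => Finset.sum_congr rfl fun a _ => by ring

end Resampling

section Coupling

variable {N α R : Type*} [Fintype N] [DecidableEq N] [Fintype α] [CommSemiring R]
  (Ind : Finset N → Prop) (order : List N) (ν : N → α → R) (P : N → α → Prop)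

lemma sum_prod_mul_ite_mem_greedyAccept {i : N} (hν : ∑ a, ν i a = 1) (g : α → R) :
    ∑ ω : N → α, (∏ j, ν j (ω j)) *
        (if i ∈ greedyAccept Ind (fun j => P j (ω j)) order then g (ω i) else 0) =
      ∑ ω : N → α, (∏ j, ν j (ω j)) *
        (if i ∈ greedyAccept Ind (Function.update (fun j => P j (ω j)) i True) order
          then ∑ a with P i a, ν i a * g a else 0) := by
  rw [sum_prod_mul_eq_sum_prod_mul_sum_update ν hν]
  refine Finset.sum_congr rfl fun ω _ => congrArg _ ?_
  simp_rw [Function.apply_update P, Function.update_self,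
    mem_greedyAccept_update_iff Ind order _ i (P i _), ite_and, Finset.sum_filter]
  split_ifs <;> simp [mul_ite]

theorem sum_prod_mul_sum_greedyAccept_congr (hν : ∀ i, ∑ a, ν i a = 1) (g h : N → α → R)
    (hgh : ∀ i, ∑ a with P i a, ν i a * g i a = ∑ a with P i a, ν i a * h i a) :
    ∑ ω : N → α, (∏ j, ν j (ω j)) *
        ∑ i ∈ greedyAccept Ind (fun j => P j (ω j)) order, g i (ω i) =
      ∑ ω : N → α, (∏ j, ν j (ω j)) *
        ∑ i ∈ greedyAccept Ind (fun j => P j (ω j)) order, h i (ω i) := by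
  have sum_by_item : ∀ f : N → α → R,
      ∑ ω : N → α, (∏ j, ν j (ω j)) *
          ∑ i ∈ greedyAccept Ind (fun j => P j (ω j)) order, f i (ω i) =
        ∑ i, ∑ ω : N → α, (∏ j, ν j (ω j)) *
          (if i ∈ greedyAccept Ind (fun j => P j (ω j)) order then f i (ω i) else 0) := by
    intro f
    rw [Finset.sum_comm]
    simp_rw [← Finset.mul_sum, Finset.sum_ite_mem, Finset.univ_inter]
  rw [sum_by_item, sum_by_item]
  simp_rw [sum_prod_mul_ite_mem_greedyAccept Ind order ν P (hν _), hgh]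

end Coupling

/-- Encoding: `ω` draws the values of all items independently, with weight `∏ i, ν i (ω i)`;
the coupled Bernoulli value `X' i` is `if q i ≤ vals i (ω i) then t i else 0`, and the
thresholds `T i ∈ {t i, ∞}` are given by `C = {i | T i = t i}`. -/
theorem stmt_12_general {N : Type*} [Fintype N] [DecidableEq N] {m : ℕ}
    (Ind : Finset N → Prop)
    (vals : N → Fin m → ℝ)
    (ν : N → Fin m → ℝ) (hν1 : ∀ i, ∑ a, ν i a = 1)
    (q t : N → ℝ) (htpos : ∀ i, 0 < t i)
    (ht : ∀ i, t i * (∑ a ∈ Finset.univ.filter fun a => q i ≤ vals i a, ν i a)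
        = ∑ a ∈ Finset.univ.filter fun a => q i ≤ vals i a, ν i a * vals i a)
    (C : Finset N) (order : List N) :
    (∀ ω : N → Fin m,
      greedyAccept Ind
          (fun i => i ∈ C ∧ t i ≤ (if q i ≤ vals i (ω i) then t i else 0)) order
        = greedyAccept Ind (fun i => i ∈ C ∧ q i ≤ vals i (ω i)) order)
    ∧ (∑ ω : N → Fin m, (∏ i, ν i (ω i)) *
          ∑ i ∈ greedyAccept Ind (fun i => i ∈ C ∧ q i ≤ vals i (ω i)) order,
            (if q i ≤ vals i (ω i) then t i else 0)
        ≤ ∑ ω : N → Fin m, (∏ i, ν i (ω i)) *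
            ∑ i ∈ greedyAccept Ind (fun i => i ∈ C ∧ q i ≤ vals i (ω i)) order,
              vals i (ω i)) := by
  refine ⟨fun ω => ?_, le_of_eq ?_⟩
  · have same_pass (i : N) :
        t i ≤ (if q i ≤ vals i (ω i) then t i else 0) ↔ q i ≤ vals i (ω i) := by
      split_ifs with h <;> simp [h, htpos i]
    simp_rw [same_pass]
  · refine sum_prod_mul_sum_greedyAccept_congr Ind order ν
      (fun j x => j ∈ C ∧ q j ≤ vals j x) hν1
      (fun i x => if q i ≤ vals i x then t i else 0) vals fun i => ?_
    by_cases hC : i ∈ C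
    · simp only [hC, true_and]
      rw [Finset.sum_congr rfl fun a ha => by rw [if_pos (Finset.mem_filter.1 ha).2],
        ← Finset.sum_mul, mul_comm, ht i]
    · simp [hC]

/-- Coupling lemma.  `X i` has finitely many values (`vals i`, masses `ν i`, product measure
on `N → Fin m` encoding independence).  Let `q i = F_i⁻¹(1 - p_i)` be the quantile threshold,
`t i = E[X i | X i ≥ q i] ≥ q i` (with `t i > 0`), and let the coupled Bernoulli variable be
`X' i = t i` iff `X i ≥ q i`, else `0`.  For a fixed-threshold algorithm with thresholds
`T i ∈ {t i, ∞}` — encoded by the set `C = {i : T i = t i}` of considered items — run on both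
coupled instances in the same arrival order: the accepted set is the same in both instances,
and the expected value of the algorithm on `X` is at least its expected value on `X'`. -/
theorem stmt_12 {N : Type*} [Fintype N] [DecidableEq N] {m : ℕ}
    (Ind : Finset N → Prop)
    (vals : N → Fin m → ℝ) (hvals : ∀ i a, 0 ≤ vals i a)
    (ν : N → Fin m → ℝ) (hν0 : ∀ i a, 0 ≤ ν i a) (hν1 : ∀ i, ∑ a, ν i a = 1)
    (q t : N → ℝ) (htpos : ∀ i, 0 < t i) (htq : ∀ i, q i ≤ t i)
    (ht : ∀ i, t i * (∑ a ∈ Finset.univ.filter fun a => q i ≤ vals i a, ν i a)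
        = ∑ a ∈ Finset.univ.filter fun a => q i ≤ vals i a, ν i a * vals i a)
    (C : Finset N) (order : List N) (horder : order.Nodup) :
    (∀ ω : N → Fin m,
      greedyAccept Ind
          (fun i => i ∈ C ∧ t i ≤ (if q i ≤ vals i (ω i) then t i else 0)) order
        = greedyAccept Ind (fun i => i ∈ C ∧ q i ≤ vals i (ω i)) order)
    ∧ (∑ ω : N → Fin m, (∏ i, ν i (ω i)) *
          ∑ i ∈ greedyAccept Ind (fun i => i ∈ C ∧ q i ≤ vals i (ω i)) order,
            (if q i ≤ vals i (ω i) then t i else 0)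
        ≤ ∑ ω : N → Fin m, (∏ i, ν i (ω i)) *
            ∑ i ∈ greedyAccept Ind (fun i => i ∈ C ∧ q i ≤ vals i (ω i)) order,
              vals i (ω i)) :=
  stmt_12_general Ind vals ν hν1 q t htpos ht C order
end

section
/- Let G = (V, E) be a graph whose edges have Bernoulli weights: edge e has value t_e ≥ 0 with probability p_e and 0 otherwise, independently, where p ∈ P_G (the graphic matroid polytope). Scale to p' = p/4, direct the graph so that every vertex has fractional in-degree (under p') at most 1/2, pick a uniformly random vertex subset A, and set thresholds T_e = t_e for edges directed from A to V∖A and T_e = ∞ otherwise. The resulting non-adaptive greedy algorithm (accepting an arriving active edge iff it meets its threshold and stays independent in the graphic matroid) obtains expected value at least (1/32) ∑_{e ∈ E} p_e t_e in the worst-case arrival order (edges arriving in increasing order of t_e). -/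
/-!
Let each edge `e` be active independently with probability `q e` (here `q = p / 4`). Fix an edge
`f = (u, v)` and a cut `A` with `u ∈ A`, `v ∉ A`. Every considered edge leaves `A`, so none starts
at `v`; hence if no other active considered edge enters `v`, then `v` is isolated in the forest
built before `f` arrives, and `f` is accepted whatever the arrival order. Since the in-degree of
`v` under `q` is at most `1/2`, this happens, given that `f` is active, with probability
`∏ (1 - q e) ≥ 1 - ∑ q e ≥ 1/2`. As `f` crosses a uniform cut with probability `1/4`, it is
accepted with probability at least `q f / 8 = p f / 32`, and linearity of expectation concludes.
-/

open scoped Classical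

/-- The undirected simple graph on `V` whose edges are the underlying undirected edges of
the directed edge set `F`. -/
def dGraph {V : Type*} (F : Finset (V × V)) : SimpleGraph V :=
  SimpleGraph.fromEdgeSet {s | ∃ e ∈ F, s = s(e.1, e.2)}

/-- The non-adaptive greedy forest algorithm: edges arrive in the order of `order`; an
arriving edge is accepted iff it is in the considered set (its threshold is `t e`, not `∞`),
it is active (its value meets the threshold), and its endpoints are not already connected by
accepted edges (so the accepted set stays a forest). -/
noncomputable def greedyForest {V : Type*} [DecidableEq V]
    (consider active : Finset (V × V)) (order : List (V × V)) : Finset (V × V) :=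
  order.foldl (fun F e =>
    if e ∈ consider ∧ e ∈ active ∧ ¬ (dGraph F).Reachable e.1 e.2 then insert e F else F) ∅

open Finset

theorem exists_endpoint_eq_of_reachable_dGraph {V : Type*} {F : Finset (V × V)} {u v : V}
    (huv : u ≠ v) (h : (dGraph F).Reachable u v) : ∃ e ∈ F, v = e.1 ∨ v = e.2 := by
  obtain ⟨w⟩ := h
  have hadj : (dGraph F).Adj w.penultimate v := w.adj_penultimate (w.not_nil_of_ne huv)
  generalize w.penultimate = x at hadj
  rw [dGraph, SimpleGraph.fromEdgeSet_adj] at hadj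
  obtain ⟨⟨e, he, hs⟩, -⟩ := hadj
  exact ⟨e, he, Sym2.mem_iff.mp (hs ▸ Sym2.mem_mk_right _ _)⟩

section Greedy

variable {V : Type*} [DecidableEq V] (consider active : Finset (V × V))

noncomputable def greedyStep (F : Finset (V × V)) (e : V × V) : Finset (V × V) :=
  if e ∈ consider ∧ e ∈ active ∧ ¬ (dGraph F).Reachable e.1 e.2 then insert e F else F

theorem greedyForest_eq_foldl (order : List (V × V)) :
    greedyForest consider active order = order.foldl (greedyStep consider active) ∅ := rfl

theorem subset_foldl_greedyStep (l : List (V × V)) (F : Finset (V × V)) :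
    F ⊆ l.foldl (greedyStep consider active) F := by
  induction l generalizing F with
  | nil => exact subset_rfl
  | cons e l ih =>
    refine subset_trans ?_ (ih _)
    unfold greedyStep
    split_ifs
    exacts [subset_insert e F, subset_rfl]

theorem mem_foldl_greedyStep {l : List (V × V)} {F : Finset (V × V)} {x : V × V}
    (hx : x ∈ l.foldl (greedyStep consider active) F) :
    x ∈ F ∨ x ∈ consider ∧ x ∈ active ∧ x ∈ l := by
  induction l generalizing F with
  | nil => exact Or.inl hx
  | cons e l ih =>
    rcases ih hx with hF | ⟨hc, ha, hl⟩
    · unfold greedyStep at hF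
      split_ifs at hF with he
      · rcases mem_insert.mp hF with rfl | hF
        exacts [Or.inr ⟨he.1, he.2.1, List.mem_cons_self⟩, Or.inl hF]
      · exact Or.inl hF
    · exact Or.inr ⟨hc, ha, List.mem_cons_of_mem e hl⟩

theorem greedyForest_subset (order : List (V × V)) :
    greedyForest consider active order ⊆ consider := fun x hx =>
  ((mem_foldl_greedyStep consider active hx).resolve_left (notMem_empty x)).1

theorem mem_greedyForest_of_isolated {order : List (V × V)} (hnodup : order.Nodup)
    {f : V × V} (hf : f ∈ order) (hloop : f.1 ≠ f.2) (hfc : f ∈ consider) (hfa : f ∈ active)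
    (hisol : ∀ e ∈ consider, e ∈ active → e ≠ f → f.2 ≠ e.1 ∧ f.2 ≠ e.2) :
    f ∈ greedyForest consider active order := by
  obtain ⟨l₁, l₂, rfl⟩ := List.append_of_mem hf
  have hfl₁ : f ∉ l₁ := fun h => List.disjoint_of_nodup_append hnodup h List.mem_cons_self
  set F := l₁.foldl (greedyStep consider active) ∅
  have hunreach : ¬ (dGraph F).Reachable f.1 f.2 := fun h => by
    obtain ⟨e, heF, hfe⟩ := exists_endpoint_eq_of_reachable_dGraph hloop h
    obtain ⟨hec, hea, hel⟩ :=
      (mem_foldl_greedyStep consider active heF).resolve_left (notMem_empty e)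
    have := hisol e hec hea (ne_of_mem_of_not_mem hel hfl₁)
    tauto
  rw [greedyForest_eq_foldl, List.foldl_append, List.foldl_cons]
  refine subset_foldl_greedyStep consider active l₂ _ ?_
  rw [greedyStep, if_pos ⟨hfc, hfa, hunreach⟩]
  exact mem_insert_self f F

end Greedy

namespace Finset

theorem one_sub_sum_le_prod_one_sub {ι R : Type*} [CommRing R] [LinearOrder R]
    [IsStrictOrderedRing R] {s : Finset ι} {q : ι → R} (h0 : ∀ i ∈ s, 0 ≤ q i)
    (h1 : ∀ i ∈ s, q i ≤ 1) : 1 - ∑ i ∈ s, q i ≤ ∏ i ∈ s, (1 - q i) := by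
  induction s using Finset.induction_on with
  | empty => simp
  | insert a s ha ih =>
    rw [sum_insert ha, prod_insert ha]
    have hs := ih (fun i hi => h0 i (mem_insert_of_mem hi)) fun i hi => h1 i (mem_insert_of_mem hi)
    have hqa : 0 ≤ 1 - q a := sub_nonneg.mpr (h1 a (mem_insert_self a s))
    have hsum : 0 ≤ q a * ∑ i ∈ s, q i :=
      mul_nonneg (h0 a (mem_insert_self a s)) (sum_nonneg fun i hi => h0 i (mem_insert_of_mem hi))
    nlinarith [mul_le_mul_of_nonneg_left hs hqa]

end Finset

section Bernoulli

variable {ι : Type*} [DecidableEq ι]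

def bernoulliWeight (E : Finset ι) (q : ι → ℝ) (R : Finset ι) : ℝ :=
  (∏ e ∈ R, q e) * ∏ e ∈ E \ R, (1 - q e)

theorem bernoulliWeight_nonneg {E R : Finset ι} {q : ι → ℝ} (h0 : ∀ e ∈ E, 0 ≤ q e)
    (h1 : ∀ e ∈ E, q e ≤ 1) (hR : R ⊆ E) : 0 ≤ bernoulliWeight E q R :=
  mul_nonneg (prod_nonneg fun e he => h0 e (hR he))
    (prod_nonneg fun e he => sub_nonneg.mpr (h1 e (mem_sdiff.mp he).1))

theorem sum_bernoulliWeight_filter_subset_disjoint {E K D : Finset ι} (hK : K ⊆ E)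
    (hD : D ⊆ E) (hKD : Disjoint K D) (q : ι → ℝ) :
    ∑ R ∈ E.powerset with K ⊆ R ∧ Disjoint D R, bernoulliWeight E q R =
      (∏ e ∈ K, q e) * ∏ e ∈ D, (1 - q e) := by
  have hterm : ∀ R ∈ E.powerset,
      (∏ e ∈ R, if e ∈ D then 0 else q e) * ∏ e ∈ E \ R, (if e ∈ K then 0 else 1 - q e) =
        if K ⊆ R ∧ Disjoint D R then bernoulliWeight E q R else 0 := by
    intro R _
    split_ifs with h
    · rw [bernoulliWeight]
      congr 1 <;> refine prod_congr rfl fun e he => if_neg ?_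
      · exact disjoint_right.mp h.2 he
      · exact fun heK => (mem_sdiff.mp he).2 (h.1 heK)
    · rcases not_and_or.mp h with hKR | hDR
      · obtain ⟨k, hk, hkR⟩ := not_subset.mp hKR
        exact mul_eq_zero_of_right _
          (prod_eq_zero (mem_sdiff.mpr ⟨hK hk, hkR⟩) (by simp [hk]))
      · obtain ⟨d, hd, hdR⟩ := not_disjoint_iff.mp hDR
        exact mul_eq_zero_of_left (prod_eq_zero hdR (by simp [hd])) _
  have hfactor : ∀ e ∈ E, ((if e ∈ D then 0 else q e) + if e ∈ K then 0 else 1 - q e) =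
      (if e ∈ K then q e else 1) * if e ∈ D then 1 - q e else 1 := by
    intro e _
    by_cases heK : e ∈ K
    · simp [heK, disjoint_left.mp hKD heK]
    · by_cases heD : e ∈ D <;> simp [heK, heD]
  rw [sum_filter, ← sum_congr rfl hterm, ← prod_add,
    prod_congr rfl hfactor, prod_mul_distrib, prod_ite_mem,
    prod_ite_mem, inter_eq_right.mpr hK, inter_eq_right.mpr hD]

theorem bernoulliWeight_half {E R : Finset ι} (hR : R ⊆ E) :
    bernoulliWeight E (fun _ => 1 / 2) R = (1 / 2) ^ E.card := by
  rw [bernoulliWeight, prod_const, prod_const, show (1 - 1 / 2 : ℝ) = 1 / 2 by norm_num,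
    ← pow_add, card_sdiff_of_subset hR, Nat.add_sub_cancel' (card_le_card hR)]

end Bernoulli

theorem card_powerset_filter_mem_not_mem {V : Type*} [Fintype V] [DecidableEq V] {u v : V}
    (huv : u ≠ v) :
    (#{A ∈ (univ : Finset V).powerset | u ∈ A ∧ v ∉ A} : ℝ) = 2 ^ Fintype.card V / 4 := by
  have h := sum_bernoulliWeight_filter_subset_disjoint (subset_univ {u})
    (subset_univ {v}) (disjoint_singleton.mpr huv) (fun _ => (1 / 2 : ℝ))
  rw [sum_congr rfl fun A hA => bernoulliWeight_half
    (mem_powerset.mp (mem_filter.mp hA).1)] at h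
  simp only [singleton_subset_iff, disjoint_singleton_left, sum_const,
    card_univ, prod_singleton, nsmul_eq_mul, one_div, inv_pow] at h
  field_simp at h ⊢
  linarith

theorem sum_mul_sum_eq_sum_mul_sum_filter {α ι R : Type*} [DecidableEq ι] [CommSemiring R]
    {s : Finset α} {E : Finset ι} {G : α → Finset ι} (hG : ∀ i ∈ s, G i ⊆ E) (w : α → R)
    (t : ι → R) : ∑ i ∈ s, w i * ∑ e ∈ G i, t e = ∑ e ∈ E, t e * ∑ i ∈ s with e ∈ G i, w i := by
  have hG' : ∀ i ∈ s, ∑ e ∈ G i, t e = ∑ e ∈ E, if e ∈ G i then t e else 0 := fun i hi => by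
    rw [← sum_filter, filter_mem_eq_inter, inter_eq_right.mpr (hG i hi)]
  rw [sum_congr rfl fun i hi => by rw [hG' i hi]]
  simp_rw [mul_sum, sum_filter, mul_ite, mul_zero]
  rw [sum_comm]
  simp_rw [mul_comm (w _)]

def crossing {V : Type*} [DecidableEq V] (E : Finset (V × V)) (A : Finset V) :
    Finset (V × V) :=
  E.filter fun e => e.1 ∈ A ∧ e.2 ∉ A

theorem div_eight_le_prob_mem_greedyForest {V : Type*} [Fintype V] [DecidableEq V]
    {E : Finset (V × V)} {q : V × V → ℝ} (hq0 : ∀ e ∈ E, 0 ≤ q e)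
    (hindeg : ∀ v : V, ∑ e ∈ E.filter (fun e => e.2 = v), q e ≤ 1 / 2)
    {order : List (V × V)} (hnodup : order.Nodup) {f : V × V} (hfE : f ∈ E) (hf : f ∈ order)
    (hloop : f.1 ≠ f.2) :
    q f / 8 ≤ (∑ A ∈ (univ : Finset V).powerset,
        ∑ R ∈ E.powerset with f ∈ greedyForest (crossing E A) R order,
          bernoulliWeight E q R) / 2 ^ Fintype.card V := by
  have hq1 : ∀ e ∈ E, q e ≤ 1 := fun e he =>
    calc q e ≤ ∑ e' ∈ E.filter (fun e' => e'.2 = e.2), q e' :=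
          single_le_sum (fun i hi => hq0 i (mem_filter.mp hi).1) (mem_filter.mpr ⟨he, rfl⟩)
      _ ≤ 1 := (hindeg e.2).trans (by norm_num)
  have hw : ∀ R ∈ E.powerset, 0 ≤ bernoulliWeight E q R := fun R hR =>
    bernoulliWeight_nonneg hq0 hq1 (mem_powerset.mp hR)
  set D := E.filter fun e => e ≠ f ∧ e.2 = f.2
  have hDE : D ⊆ E := filter_subset _ _
  have hD : ∑ e ∈ D, q e ≤ 1 / 2 :=
    (sum_le_sum_of_subset_of_nonneg
      (fun e he => mem_filter.mpr ⟨(mem_filter.mp he).1, (mem_filter.mp he).2.2⟩)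
      fun e he _ => hq0 e (mem_filter.mp he).1).trans (hindeg f.2)
  have hunblocked : ∀ A : Finset V, f.1 ∈ A ∧ f.2 ∉ A → q f / 2 ≤
      ∑ R ∈ E.powerset with f ∈ greedyForest (crossing E A) R order,
        bernoulliWeight E q R := by
    rintro A ⟨hfA, hfA'⟩
    calc q f / 2 ≤ q f * ∏ e ∈ D, (1 - q e) := by
          have := one_sub_sum_le_prod_one_sub (fun e he => hq0 e (hDE he))
            fun e he => hq1 e (hDE he)
          nlinarith [hq0 f hfE]
      _ = ∑ R ∈ E.powerset with {f} ⊆ R ∧ Disjoint D R, bernoulliWeight E q R := by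
          rw [sum_bernoulliWeight_filter_subset_disjoint (singleton_subset_iff.mpr hfE) hDE
            (disjoint_singleton_left.mpr fun h => (mem_filter.mp h).2.1 rfl), prod_singleton]
      _ ≤ _ := by
          refine sum_le_sum_of_subset_of_nonneg (fun R hR => ?_)
            fun R hR _ => hw R (mem_filter.mp hR).1
          obtain ⟨hRE, hfR, hDR⟩ := mem_filter.mp hR
          refine mem_filter.mpr ⟨hRE, mem_greedyForest_of_isolated _ _ hnodup hf hloop
            (mem_filter.mpr ⟨hfE, hfA, hfA'⟩) (singleton_subset_iff.mp hfR) ?_⟩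
          intro e he heR hef
          obtain ⟨heE, he1, -⟩ := mem_filter.mp he
          exact ⟨fun h => hfA' (h ▸ he1),
            fun h => disjoint_left.mp hDR (mem_filter.mpr ⟨heE, hef, h.symm⟩) heR⟩
  calc q f / 8
      = (#{A ∈ (univ : Finset V).powerset | f.1 ∈ A ∧ f.2 ∉ A} • (q f / 2)) /
          2 ^ Fintype.card V := by
        rw [nsmul_eq_mul, card_powerset_filter_mem_not_mem hloop]
        field_simp
        ring
    _ ≤ (∑ A ∈ (univ : Finset V).powerset with f.1 ∈ A ∧ f.2 ∉ A,
          ∑ R ∈ E.powerset with f ∈ greedyForest (crossing E A) R order,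
            bernoulliWeight E q R) / 2 ^ Fintype.card V := by
        gcongr
        rw [← sum_const]
        exact sum_le_sum fun A hA => hunblocked A (mem_filter.mp hA).2
    _ ≤ _ := by
        gcongr
        · exact fun A _ _ => sum_nonneg fun R hR => hw R (mem_filter.mp hR).1
        · exact filter_subset _ _

theorem stmt_13_general {V : Type*} [Fintype V] [DecidableEq V]
    (E : Finset (V × V)) (hE : ∀ e ∈ E, e.1 ≠ e.2)
    (p t : V × V → ℝ) (hp0 : ∀ e, 0 ≤ p e) (ht : ∀ e, 0 ≤ t e)
    (hdir : ∀ v : V, ∑ e ∈ E.filter (fun e => e.2 = v), p e / 4 ≤ 1 / 2)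
    (order : List (V × V)) (hnodup : order.Nodup) (hmem : ∀ e, e ∈ order ↔ e ∈ E) :
    (1 / 32) * ∑ e ∈ E, p e * t e ≤
      (∑ A ∈ (Finset.univ : Finset V).powerset,
        ∑ R ∈ E.powerset,
          ((∏ e ∈ R, p e / 4) * ∏ e ∈ E \ R, (1 - p e / 4)) *
            ∑ e ∈ greedyForest (E.filter fun e => e.1 ∈ A ∧ e.2 ∉ A) R order, t e)
        / 2 ^ Fintype.card V := by
  set q : V × V → ℝ := fun e => p e / 4
  set G : Finset V → Finset (V × V) → Finset (V × V) :=
    fun A R => greedyForest (crossing E A) R order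
  have hG : ∀ A, ∀ R ∈ E.powerset, G A R ⊆ E := fun A _ _ =>
    (greedyForest_subset _ _ order).trans (filter_subset _ _)
  change _ ≤ (∑ A ∈ (univ : Finset V).powerset, ∑ R ∈ E.powerset,
    bernoulliWeight E q R * ∑ e ∈ G A R, t e) / _
  simp_rw [sum_mul_sum_eq_sum_mul_sum_filter (hG _)]
  rw [sum_comm, sum_div, mul_sum]
  refine sum_le_sum fun f hf => ?_
  have hprob := div_eight_le_prob_mem_greedyForest (q := q)
    (fun e _ => div_nonneg (hp0 e) (by norm_num)) hdir hnodup hf ((hmem f).mpr hf) (hE f hf)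
  rw [← mul_sum, mul_div_assoc]
  calc 1 / 32 * (p f * t f) = t f * (q f / 8) := by ring
    _ ≤ _ := mul_le_mul_of_nonneg_left hprob (ht f)

/-- Non-adaptive prophet inequality for graphic matroids, Bernoulli instance:
`p` lies in the graphic matroid polytope, the graph is directed so that every vertex has
fractional in-degree at most `1/2` under `p/4`, the considered set is the set of edges
crossing a uniformly random cut from `A` to `V ∖ A`, thresholds are `t e` on considered
edges and `∞` elsewhere, and each edge is active (value `t e`, thinned to mass `p e / 4`)
independently.  Against the worst-case arrival order (increasing `t`), the algorithm's
expected value is at least `(1/32) ∑_e p e · t e`. -/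
theorem stmt_13 {V : Type*} [Fintype V] [DecidableEq V]
    (E : Finset (V × V)) (hE : ∀ e ∈ E, e.1 ≠ e.2)
    (p t : V × V → ℝ) (hp0 : ∀ e, 0 ≤ p e) (ht : ∀ e, 0 ≤ t e)
    (hpoly : ∀ S ⊆ E, ∑ e ∈ S, p e ≤
      (Fintype.card V : ℝ) - Nat.card (dGraph S).ConnectedComponent)
    (hdir : ∀ v : V, ∑ e ∈ E.filter (fun e => e.2 = v), p e / 4 ≤ 1 / 2)
    (order : List (V × V)) (hnodup : order.Nodup) (hmem : ∀ e, e ∈ order ↔ e ∈ E)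
    (hsorted : order.Pairwise fun a b => t a ≤ t b) :
    (1 / 32) * ∑ e ∈ E, p e * t e ≤
      (∑ A ∈ (Finset.univ : Finset V).powerset,
        ∑ R ∈ E.powerset,
          ((∏ e ∈ R, p e / 4) * ∏ e ∈ E \ R, (1 - p e / 4)) *
            ∑ e ∈ greedyForest (E.filter fun e => e.1 ∈ A ∧ e.2 ∉ A) R order, t e)
        / 2 ^ Fintype.card V :=
  stmt_13_general E hE p t hp0 ht hdir order hnodup hmem
end

section
/- Let elements of a matroid arrive in some order, each independently active with probability q_i and having value t_i, and suppose a greedy algorithm accepts each active element that is independent of the previously accepted set. If for each element i the probability (over activations of the other elements) that i is spanned by the set of active elements preceding it is at most b_i, then the expected value obtained by the greedy algorithm is at least ∑_i q_i t_i (1 − b_i). -/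
open scoped Classical

/-- Rank of a set in the matroid given by the independence predicate `Ind`. -/
noncomputable def mrank {N : Type*} [DecidableEq N] (Ind : Finset N → Prop)
    (S : Finset N) : ℕ :=
  (S.powerset.filter Ind).sup Finset.card

/-- Element `i` is spanned by `S` in the matroid `Ind`. -/
def mspanned {N : Type*} [DecidableEq N] (Ind : Finset N → Prop) (i : N) (S : Finset N) :
    Prop :=
  mrank Ind (insert i S) = mrank Ind S

/-- The greedy algorithm over arrival order `order`: accept each active element that is not
spanned by the previously accepted set. -/
noncomputable def greedyMatroid {N : Type*} [DecidableEq N]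
    (Ind : Finset N → Prop) (active : N → Prop) (order : List N) : Finset N :=
  order.foldl (fun A i => if active i ∧ ¬ mspanned Ind i A then insert i A else A) ∅

/-! The greedy set is at every moment a maximum independent subset of the active elements that
have arrived so far. So if the active elements preceding an active `i` do not span `i`, neither
does the greedy set when `i` arrives, and `i` is accepted. Whether `i` is active is independent
of the activity of the elements preceding it, so `i` is accepted with probability at least
`q i * (1 - b i)`, and linearity of expectation gives the bound. -/

section Rank

variable {N : Type*} [DecidableEq N] {Ind : Finset N → Prop}

def IsMaxIndep (Ind : Finset N → Prop) (A F : Finset N) : Prop :=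
  A ⊆ F ∧ Ind A ∧ A.card = mrank Ind F

lemma mrank_le_card (S : Finset N) : mrank Ind S ≤ S.card :=
  Finset.sup_le fun _ hJ => Finset.card_le_card (Finset.mem_powerset.1 (Finset.mem_filter.1 hJ).1)

lemma mrank_mono {S T : Finset N} (h : S ⊆ T) : mrank Ind S ≤ mrank Ind T :=
  Finset.sup_mono (Finset.filter_subset_filter _ (Finset.powerset_mono.2 h))

lemma card_le_mrank {J S : Finset N} (hJS : J ⊆ S) (hJ : Ind J) : J.card ≤ mrank Ind S :=
  Finset.le_sup (Finset.mem_filter.2 ⟨Finset.mem_powerset.2 hJS, hJ⟩)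

lemma mrank_eq_card {S : Finset N} (hS : Ind S) : mrank Ind S = S.card :=
  (mrank_le_card S).antisymm (card_le_mrank subset_rfl hS)

lemma exists_isMaxIndep (hempty : Ind ∅) (S : Finset N) : ∃ A, IsMaxIndep Ind A S := by
  obtain ⟨A, hA, hcard⟩ := Finset.exists_mem_eq_sup (S.powerset.filter Ind)
    ⟨∅, Finset.mem_filter.2 ⟨Finset.empty_mem_powerset S, hempty⟩⟩ Finset.card
  rw [Finset.mem_filter, Finset.mem_powerset] at hA
  exact ⟨A, hA.1, hA.2, hcard.symm⟩

lemma isMaxIndep_empty (hempty : Ind ∅) : IsMaxIndep Ind ∅ ∅ :=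
  ⟨subset_rfl, hempty, (mrank_eq_card hempty).symm⟩

lemma mrank_insert_le (hempty : Ind ∅) (hdown : ∀ I J : Finset N, I ⊆ J → Ind J → Ind I)
    (x : N) (S : Finset N) : mrank Ind (insert x S) ≤ mrank Ind S + 1 := by
  obtain ⟨J, hJS, hJ, hcard⟩ := exists_isMaxIndep hempty (insert x S)
  have herase : (J.erase x).card ≤ mrank Ind S :=
    card_le_mrank ((Finset.erase_subset_erase x hJS).trans (Finset.erase_insert_subset x S))
      (hdown _ _ (Finset.erase_subset x J) hJ)
  have := Finset.pred_card_le_card_erase (s := J) (a := x)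
  omega

lemma IsMaxIndep.mspanned_of_mspanned (hempty : Ind ∅)
    (hexch : ∀ I J : Finset N, Ind I → Ind J → I.card < J.card →
      ∃ x ∈ J \ I, Ind (insert x I))
    {A F : Finset N} {x : N} (hAF : IsMaxIndep Ind A F) (hx : mspanned Ind x A) :
    mspanned Ind x F := by
  obtain ⟨hsub, hA, hcard⟩ := hAF
  refine le_antisymm ?_ (mrank_mono (Finset.subset_insert x F))
  by_contra! hlt
  obtain ⟨J, hJsub, hJ, hJcard⟩ := exists_isMaxIndep hempty (insert x F)
  obtain ⟨y, hy, hyA⟩ := hexch A J hA hJ (by omega)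
  rw [Finset.mem_sdiff] at hy
  have hcard_insert := Finset.card_insert_of_notMem hy.2
  rcases Finset.mem_insert.1 (hJsub hy.1) with rfl | hyF
  · have := card_le_mrank subset_rfl hyA
    rw [show mrank Ind (insert y A) = mrank Ind A from hx, mrank_eq_card hA] at this
    omega
  · have := card_le_mrank (Finset.insert_subset hyF hsub) hyA
    omega

lemma IsMaxIndep.insert_of_mspanned (hempty : Ind ∅)
    (hexch : ∀ I J : Finset N, Ind I → Ind J → I.card < J.card →
      ∃ x ∈ J \ I, Ind (insert x I))
    {A F : Finset N} {x : N} (hAF : IsMaxIndep Ind A F) (hx : mspanned Ind x A) :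
    IsMaxIndep Ind A (insert x F) :=
  ⟨hAF.1.trans (Finset.subset_insert x F), hAF.2.1,
    hAF.2.2.trans (hAF.mspanned_of_mspanned hempty hexch hx).symm⟩

lemma IsMaxIndep.insert_insert (hempty : Ind ∅)
    (hdown : ∀ I J : Finset N, I ⊆ J → Ind J → Ind I)
    {A F : Finset N} {x : N} (hAF : IsMaxIndep Ind A F) (hx : ¬ mspanned Ind x A) :
    IsMaxIndep Ind (insert x A) (insert x F) := by
  obtain ⟨hsub, hA, hcard⟩ := hAF
  have hxA : x ∉ A := fun h => hx (by rw [mspanned, Finset.insert_eq_of_mem h])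
  have hcard_insert := Finset.card_insert_of_notMem hxA
  have hrank : mrank Ind (insert x A) = A.card + 1 := by
    have := mrank_insert_le hempty hdown x A
    have := mrank_mono (Ind := Ind) (Finset.subset_insert x A)
    have := mrank_eq_card hA
    rw [mspanned] at hx
    omega
  -- a maximum independent subset of `insert x A` is too large to be a proper subset
  obtain ⟨J, hJsub, hJ, hJcard⟩ := exists_isMaxIndep hempty (insert x A)
  have hJeq : J = insert x A := Finset.eq_of_subset_of_card_le hJsub (by omega)
  subst hJeq
  have hsubF : insert x A ⊆ insert x F := Finset.insert_subset_insert x hsub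
  refine ⟨hsubF, hJ, le_antisymm (card_le_mrank hsubF hJ) ?_⟩
  have := mrank_insert_le hempty hdown x F
  omega

end Rank

section Greedy

variable {N : Type*} [DecidableEq N] {Ind : Finset N → Prop}

lemma greedyMatroid_append_singleton (act : N → Prop) (l : List N) (x : N) :
    greedyMatroid Ind act (l ++ [x]) =
      if act x ∧ ¬ mspanned Ind x (greedyMatroid Ind act l) then
        insert x (greedyMatroid Ind act l)
      else greedyMatroid Ind act l := by
  rw [greedyMatroid, List.foldl_append]
  rfl

lemma greedyMatroid_subset_append (act : N → Prop) (l₁ l₂ : List N) :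
    greedyMatroid Ind act l₁ ⊆ greedyMatroid Ind act (l₁ ++ l₂) := by
  induction l₂ using List.reverseRecOn with
  | nil => rw [List.append_nil]
  | append_singleton l₂ x ih =>
    rw [← List.append_assoc, greedyMatroid_append_singleton]
    split_ifs
    · exact ih.trans (Finset.subset_insert x _)
    · exact ih

lemma isMaxIndep_greedyMatroid (hempty : Ind ∅)
    (hdown : ∀ I J : Finset N, I ⊆ J → Ind J → Ind I)
    (hexch : ∀ I J : Finset N, Ind I → Ind J → I.card < J.card →
      ∃ x ∈ J \ I, Ind (insert x I))
    (act : N → Prop) (l : List N) :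
    IsMaxIndep Ind (greedyMatroid Ind act l) (l.toFinset.filter act) := by
  induction l using List.reverseRecOn with
  | nil => exact isMaxIndep_empty hempty
  | append_singleton l x ih =>
    have hfinset : (l ++ [x]).toFinset = insert x l.toFinset := by ext; simp
    rw [greedyMatroid_append_singleton, hfinset, Finset.filter_insert]
    by_cases hact : act x
    · by_cases hx : mspanned Ind x (greedyMatroid Ind act l)
      · rw [if_pos hact, if_neg (fun h => h.2 hx)]
        exact ih.insert_of_mspanned hempty hexch hx
      · rw [if_pos hact, if_pos ⟨hact, hx⟩]
        exact ih.insert_insert hempty hdown hx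
    · rw [if_neg hact, if_neg (fun h => hact h.1)]
      exact ih

lemma List.exists_eq_takeWhile_ne_append {α : Type*} [DecidableEq α] {i : α} {l : List α}
    (hi : i ∈ l) : ∃ t, l = l.takeWhile (· ≠ i) ++ i :: t := by
  induction l with
  | nil => cases hi
  | cons a l ih =>
    by_cases ha : a = i
    · exact ⟨l, by simp [ha]⟩
    · obtain ⟨t, ht⟩ := ih ((List.mem_cons.1 hi).resolve_left (Ne.symm ha))
      exact ⟨t, by simpa [ha] using ht⟩

lemma mem_greedyMatroid (hempty : Ind ∅)
    (hdown : ∀ I J : Finset N, I ⊆ J → Ind J → Ind I)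
    (hexch : ∀ I J : Finset N, Ind I → Ind J → I.card < J.card →
      ∃ x ∈ J \ I, Ind (insert x I))
    {act : N → Prop} {order : List N} {i : N} (hi : i ∈ order) (hact : act i)
    (hspan : ¬ mspanned Ind i ((order.takeWhile (· ≠ i)).toFinset.filter act)) :
    i ∈ greedyMatroid Ind act order := by
  obtain ⟨t, ht⟩ := List.exists_eq_takeWhile_ne_append hi
  set pre := order.takeWhile (· ≠ i)
  have hpre := isMaxIndep_greedyMatroid hempty hdown hexch act pre
  have haccept : i ∈ greedyMatroid Ind act (pre ++ [i]) := by
    rw [greedyMatroid_append_singleton,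
      if_pos ⟨hact, fun h => hspan (hpre.mspanned_of_mspanned hempty hexch h)⟩]
    exact Finset.mem_insert_self i _
  rw [ht, ← List.singleton_append, ← List.append_assoc]
  exact greedyMatroid_subset_append act _ t haccept

lemma sum_ite_not_mspanned_le_sum_greedyMatroid [Fintype N] (hempty : Ind ∅)
    (hdown : ∀ I J : Finset N, I ⊆ J → Ind J → Ind I)
    (hexch : ∀ I J : Finset N, Ind I → Ind J → I.card < J.card →
      ∃ x ∈ J \ I, Ind (insert x I))
    {t : N → ℝ} (ht : ∀ i, 0 ≤ t i) {order : List N} (hfull : ∀ i : N, i ∈ order)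
    (R : Finset N) :
    ∑ i, (if i ∈ R then
        (if mspanned Ind i ((order.takeWhile (· ≠ i)).toFinset ∩ R) then 0 else t i)
        else 0) ≤
      ∑ i ∈ greedyMatroid Ind (· ∈ R) order, t i := by
  rw [← Finset.univ_inter (greedyMatroid Ind (· ∈ R) order), ← Finset.sum_ite_mem]
  refine Finset.sum_le_sum fun i _ => ?_
  by_cases hG : i ∈ greedyMatroid Ind (· ∈ R) order
  · rw [if_pos hG]
    split_ifs <;> simp [ht i]
  · rw [if_neg hG]
    split_ifs with hR hspan
    · exact le_rfl
    · refine absurd (mem_greedyMatroid hempty hdown hexch (hfull i) hR ?_) hG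
      convert hspan using 2
      ext
      simp
    · exact le_rfl

end Greedy

section ProductBernoulli

variable {N : Type*} [DecidableEq N]

/-- Probability that the set of active elements of `S` is exactly `R`, when each `j` is active
independently with probability `q j`. -/
def prodBernoulli (q : N → ℝ) (S R : Finset N) : ℝ :=
  (∏ j ∈ R, q j) * ∏ j ∈ S \ R, (1 - q j)

variable (q : N → ℝ)

lemma prodBernoulli_nonneg (hq0 : ∀ i, 0 ≤ q i) (hq1 : ∀ i, q i ≤ 1) (S R : Finset N) :
    0 ≤ prodBernoulli q S R :=
  mul_nonneg (Finset.prod_nonneg fun j _ => hq0 j)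
    (Finset.prod_nonneg fun j _ => sub_nonneg.2 (hq1 j))

lemma sum_prodBernoulli (S : Finset N) : ∑ R ∈ S.powerset, prodBernoulli q S R = 1 := by
  simp [prodBernoulli, ← Finset.prod_add]

lemma prodBernoulli_insert_of_notMem {i : N} {S R : Finset N} (hiS : i ∉ S) (hiR : i ∉ R) :
    prodBernoulli q (insert i S) R = (1 - q i) * prodBernoulli q S R := by
  rw [prodBernoulli, prodBernoulli, Finset.insert_sdiff_of_notMem _ hiR,
    Finset.prod_insert (fun h => hiS (Finset.mem_sdiff.1 h).1)]
  ring

lemma prodBernoulli_insert_insert {i : N} {S R : Finset N} (hiS : i ∉ S) (hRS : R ⊆ S) :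
    prodBernoulli q (insert i S) (insert i R) = q i * prodBernoulli q S R := by
  rw [prodBernoulli, prodBernoulli, Finset.insert_sdiff_insert,
    Finset.sdiff_insert_of_notMem hiS, Finset.prod_insert (fun h => hiS (hRS h))]
  ring

lemma sum_prodBernoulli_union_mul_inter (g : Finset N → ℝ) {L D : Finset N}
    (hLD : Disjoint L D) :
    ∑ R ∈ (L ∪ D).powerset, prodBernoulli q (L ∪ D) R * g (L ∩ R) =
      ∑ R ∈ L.powerset, prodBernoulli q L R * g R := by
  induction D using Finset.induction_on with
  | empty =>
    rw [Finset.union_empty]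
    exact Finset.sum_congr rfl fun R hR => by
      rw [Finset.inter_eq_right.2 (Finset.mem_powerset.1 hR)]
  | @insert x D hxD ih =>
    have hxL : x ∉ L := Finset.disjoint_right.1 hLD (Finset.mem_insert_self x D)
    have hx : x ∉ L ∪ D := by simp [hxL, hxD]
    rw [Finset.union_insert, Finset.sum_powerset_insert hx,
      ← ih (hLD.mono_right (Finset.subset_insert x D)), ← Finset.sum_add_distrib]
    refine Finset.sum_congr rfl fun R hR => ?_
    have hRsub := Finset.mem_powerset.1 hR
    rw [prodBernoulli_insert_of_notMem q hx (fun h => hx (hRsub h)),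
      prodBernoulli_insert_insert q hx hRsub, Finset.inter_insert_of_notMem hxL]
    ring

lemma sum_prodBernoulli_mul_inter (g : Finset N → ℝ) {L S : Finset N} (hLS : L ⊆ S) :
    ∑ R ∈ S.powerset, prodBernoulli q S R * g (L ∩ R) =
      ∑ R ∈ L.powerset, prodBernoulli q L R * g R := by
  rw [← Finset.union_sdiff_of_subset hLS]
  exact sum_prodBernoulli_union_mul_inter q g Finset.disjoint_sdiff

lemma sum_prodBernoulli_insert_mul_ite_mem (g : Finset N → ℝ) {i : N} {L S : Finset N}
    (hiS : i ∉ S) (hLS : L ⊆ S) :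
    ∑ R ∈ (insert i S).powerset,
        prodBernoulli q (insert i S) R * (if i ∈ R then g (L ∩ R) else 0) =
      q i * ∑ R ∈ L.powerset, prodBernoulli q L R * g R := by
  have hiL : i ∉ L := fun h => hiS (hLS h)
  have hinactive : ∑ R ∈ S.powerset,
      prodBernoulli q (insert i S) R * (if i ∈ R then g (L ∩ R) else 0) = 0 :=
    Finset.sum_eq_zero fun R hR => by
      rw [if_neg (fun h => hiS (Finset.mem_powerset.1 hR h)), mul_zero]
  rw [Finset.sum_powerset_insert hiS, hinactive, zero_add, ← sum_prodBernoulli_mul_inter q g hLS,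
    Finset.mul_sum]
  refine Finset.sum_congr rfl fun R hR => ?_
  rw [if_pos (Finset.mem_insert_self i R), Finset.inter_insert_of_notMem hiL,
    prodBernoulli_insert_insert q hiS (Finset.mem_powerset.1 hR)]
  ring

lemma mul_mul_one_sub_le_sum_prodBernoulli [Fintype N] {i : N} {c b : ℝ}
    (hqi : 0 ≤ q i) (hc : 0 ≤ c) {L : Finset N} (hiL : i ∉ L) (P : Finset N → Prop)
    (hb : ∑ R ∈ L.powerset, (if P R then prodBernoulli q L R else 0) ≤ b) :
    q i * c * (1 - b) ≤ ∑ R ∈ (Finset.univ : Finset N).powerset,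
      prodBernoulli q Finset.univ R * (if i ∈ R then (if P (L ∩ R) then 0 else c) else 0) := by
  have hLE : L ⊆ Finset.univ.erase i := fun x hx =>
    Finset.mem_erase.2 ⟨ne_of_mem_of_not_mem hx hiL, Finset.mem_univ x⟩
  rw [← Finset.insert_erase (Finset.mem_univ i),
    sum_prodBernoulli_insert_mul_ite_mem q (fun S => if P S then 0 else c)
      (Finset.notMem_erase i _) hLE]
  have hcompl : ∑ R ∈ L.powerset, prodBernoulli q L R * (if P R then 0 else c) =
      c * (1 - ∑ R ∈ L.powerset, (if P R then prodBernoulli q L R else 0)) := by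
    rw [← sum_prodBernoulli q L, ← Finset.sum_sub_distrib, Finset.mul_sum]
    exact Finset.sum_congr rfl fun R _ => by split_ifs <;> ring
  rw [hcompl, mul_assoc]
  gcongr

end ProductBernoulli

theorem stmt_19_general {N : Type*} [Fintype N] [DecidableEq N]
    (Ind : Finset N → Prop) (hempty : Ind ∅)
    (hdown : ∀ I J : Finset N, I ⊆ J → Ind J → Ind I)
    (hexch : ∀ I J : Finset N, Ind I → Ind J → I.card < J.card →
      ∃ x ∈ J \ I, Ind (insert x I))
    (q : N → ℝ) (hq0 : ∀ i, 0 ≤ q i) (hq1 : ∀ i, q i ≤ 1)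
    (t : N → ℝ) (ht : ∀ i, 0 ≤ t i)
    (order : List N) (hfull : ∀ i : N, i ∈ order)
    (b : N → ℝ)
    (hb : ∀ i : N,
      ∑ R ∈ ((order.takeWhile (· ≠ i)).toFinset).powerset,
        (if mspanned Ind i R then
          (∏ j ∈ R, q j) * ∏ j ∈ (order.takeWhile (· ≠ i)).toFinset \ R, (1 - q j)
        else 0) ≤ b i) :
    ∑ i, q i * t i * (1 - b i) ≤
      ∑ R ∈ (Finset.univ : Finset N).powerset,
        ((∏ j ∈ R, q j) * ∏ j ∈ (Finset.univ : Finset N) \ R, (1 - q j)) *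
          ∑ i ∈ greedyMatroid Ind (fun i => i ∈ R) order, t i := by
  have hprefix (i : N) : i ∉ (order.takeWhile (· ≠ i)).toFinset := fun h => by
    simpa using List.mem_takeWhile_imp (List.mem_toFinset.1 h)
  let gain (i : N) (R : Finset N) : ℝ :=
    if i ∈ R then
      (if mspanned Ind i ((order.takeWhile (· ≠ i)).toFinset ∩ R) then 0 else t i)
    else 0
  calc ∑ i, q i * t i * (1 - b i)
      ≤ ∑ i, ∑ R ∈ (Finset.univ : Finset N).powerset,
          prodBernoulli q Finset.univ R * gain i R :=
        Finset.sum_le_sum fun i _ =>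
          mul_mul_one_sub_le_sum_prodBernoulli q (hq0 i) (ht i) (hprefix i) _ (hb i)
    _ = ∑ R ∈ (Finset.univ : Finset N).powerset,
          prodBernoulli q Finset.univ R * ∑ i, gain i R := by
        simp only [Finset.mul_sum]
        exact Finset.sum_comm
    _ ≤ _ := Finset.sum_le_sum fun R _ => mul_le_mul_of_nonneg_left
        (sum_ite_not_mspanned_le_sum_greedyMatroid hempty hdown hexch ht hfull R)
        (prodBernoulli_nonneg q hq0 hq1 _ R)

/-- Greedy lower bound: elements arrive in order `order`, each independently active with
probability `q i` and worth `t i ≥ 0`; greedy accepts each active unspanned element.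
If for each `i` the probability that `i` is spanned by the active elements preceding it is
at most `b i`, then the expected value of greedy is at least `∑_i q i t i (1 - b i)`. -/
theorem stmt_19 {N : Type*} [Fintype N] [DecidableEq N]
    (Ind : Finset N → Prop) (hempty : Ind ∅)
    (hdown : ∀ I J : Finset N, I ⊆ J → Ind J → Ind I)
    (hexch : ∀ I J : Finset N, Ind I → Ind J → I.card < J.card →
      ∃ x ∈ J \ I, Ind (insert x I))
    (q : N → ℝ) (hq0 : ∀ i, 0 ≤ q i) (hq1 : ∀ i, q i ≤ 1)
    (t : N → ℝ) (ht : ∀ i, 0 ≤ t i)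
    (order : List N) (hnodup : order.Nodup) (hfull : ∀ i : N, i ∈ order)
    (b : N → ℝ)
    (hb : ∀ i : N,
      ∑ R ∈ ((order.takeWhile (· ≠ i)).toFinset).powerset,
        (if mspanned Ind i R then
          (∏ j ∈ R, q j) * ∏ j ∈ (order.takeWhile (· ≠ i)).toFinset \ R, (1 - q j)
        else 0) ≤ b i) :
    ∑ i, q i * t i * (1 - b i) ≤
      ∑ R ∈ (Finset.univ : Finset N).powerset,
        ((∏ j ∈ R, q j) * ∏ j ∈ (Finset.univ : Finset N) \ R, (1 - q j)) *
          ∑ i ∈ greedyMatroid Ind (fun i => i ∈ R) order, t i :=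
  stmt_19_general Ind hempty hdown hexch q hq0 hq1 t ht order hfull b hb
end
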